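/- arXiv:2309.08441 — 5 statements merged into one kernel-verified Lean document; each statement's English description precedes it below -/
import Mathlib

section
/- (Asymptote of the sub-FAS branch CDF, eq. (A.2)/(10c) of the paper.) Let N ≥ 2 be a natural number (the number of ports per branch), m ≥ 1 a natural number (the Nakagami fading parameter), Ω₁, …, Ω_N positive reals, and μ₂, …, μ_N reals with 0 ≤ μ_k < 1. Define for x > 0: F(x) = (2 m^m / (Γ(m) Ω₁^{2m})) · ∫₀^{√x} r^{2m-1} e^{-m r²/Ω₁²} · ∏_{k=2}^{N} [ ( m x / (Ω_k² (1-μ_k²)) )^m · e^{- m μ_k² r² / (Ω₁² (1-μ_k²))} / m! ] dr. Then F(x) ~ a₀ · x^{m N} as x → 0⁺, where a₀ = ( m^{m-1} / ( Γ(m) Ω₁^{2m} (m!)^{N-1} ) ) · ∏_{k=2}^{N} ( m / (Ω_k² (1-μ_k²)) )^m. -/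
open Real Filter Topology MeasureTheory Finset

lemma key_asymp (n : ℕ) (hn : 1 ≤ n) (c : ℝ) (hc : 0 ≤ c) :
    Tendsto (fun x : ℝ => (2*(n:ℝ)) *
      (∫ r in (0:ℝ)..Real.sqrt x, r^(2*n-1) * Real.exp (-(c*r^2))) / x^n)
      (𝓝[>] 0) (𝓝 1) := by
  have hineq : ∀ x : ℝ, 0 < x →
      Real.exp (-(c*x)) ≤ (2*(n:ℝ)) *
        (∫ r in (0:ℝ)..Real.sqrt x, r^(2*n-1) * Real.exp (-(c*r^2))) / x^n ∧
      (2*(n:ℝ)) * (∫ r in (0:ℝ)..Real.sqrt x, r^(2*n-1) * Real.exp (-(c*r^2))) / x^n ≤ 1 := by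
    intro x hx
    have hs : 0 ≤ Real.sqrt x := Real.sqrt_nonneg x
    have hs2 : Real.sqrt x ^ 2 = x := Real.sq_sqrt hx.le
    have hxn : (0:ℝ) < x^n := pow_pos hx n
    have h2n : (0:ℝ) < 2*(n:ℝ) := by positivity
    have hcontK : ∀ K : ℝ, IntervalIntegrable
        (fun r : ℝ => r^(2*n-1) * Real.exp (-(c*K))) volume 0 (Real.sqrt x) :=
      fun K => Continuous.intervalIntegrable (by continuity) _ _
    have hcont2 : IntervalIntegrable (fun r : ℝ => r^(2*n-1) * Real.exp (-(c*r^2)))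
        volume 0 (Real.sqrt x) :=
      Continuous.intervalIntegrable (by continuity) _ _
    have hpowint : ∀ K : ℝ,
        (∫ r in (0:ℝ)..Real.sqrt x, r^(2*n-1) * Real.exp (-(c*K)))
          = Real.exp (-(c*K)) * (x^n / (2*(n:ℝ))) := by
      intro K
      rw [intervalIntegral.integral_mul_const, integral_pow]
      have h1 : 2*n - 1 + 1 = 2*n := by omega
      have h2 : Real.sqrt x ^ (2*n) = x^n := by rw [pow_mul, hs2]
      have h3 : (0:ℝ) ^ (2*n) = 0 := zero_pow (by omega)
      have hd : ((2*n-1:ℕ):ℝ) + 1 = 2*(n:ℝ) := by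
        rw [Nat.cast_sub (by omega : 1 ≤ 2*n)]
        push_cast; ring
      rw [h1, h2, h3, hd]
      ring
    have hnonneg : ∀ r ∈ Set.Icc (0:ℝ) (Real.sqrt x), (0:ℝ) ≤ r^(2*n-1) := by
      intro r hr; exact pow_nonneg hr.1 _
    constructor
    · rw [le_div_iff₀ hxn]
      have hmono : (∫ r in (0:ℝ)..Real.sqrt x, r^(2*n-1) * Real.exp (-(c*x)))
          ≤ ∫ r in (0:ℝ)..Real.sqrt x, r^(2*n-1) * Real.exp (-(c*r^2)) := by
        apply intervalIntegral.integral_mono_on hs (hcontK x) hcont2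
        intro r hr
        apply mul_le_mul_of_nonneg_left _ (hnonneg r hr)
        apply Real.exp_le_exp.mpr
        have : r^2 ≤ x := by
          calc r^2 ≤ Real.sqrt x ^ 2 := by
                apply sq_le_sq' (by linarith [hr.1, hr.2]) hr.2
            _ = x := hs2
        nlinarith
      calc Real.exp (-(c*x)) * x^n
          = 2*(n:ℝ) * (Real.exp (-(c*x)) * (x^n / (2*(n:ℝ)))) := by field_simp
        _ = 2*(n:ℝ) * ∫ r in (0:ℝ)..Real.sqrt x, r^(2*n-1) * Real.exp (-(c*x)) := by
            rw [hpowint x]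
        _ ≤ 2*(n:ℝ) * ∫ r in (0:ℝ)..Real.sqrt x, r^(2*n-1) * Real.exp (-(c*r^2)) := by
            exact mul_le_mul_of_nonneg_left hmono h2n.le
    · rw [div_le_one hxn]
      have hmono : (∫ r in (0:ℝ)..Real.sqrt x, r^(2*n-1) * Real.exp (-(c*r^2)))
          ≤ ∫ r in (0:ℝ)..Real.sqrt x, r^(2*n-1) * Real.exp (-(c*(0:ℝ))) := by
        apply intervalIntegral.integral_mono_on hs hcont2 (hcontK 0)
        intro r hr
        apply mul_le_mul_of_nonneg_left _ (hnonneg r hr)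
        apply Real.exp_le_exp.mpr
        nlinarith [sq_nonneg r]
      calc 2*(n:ℝ) * ∫ r in (0:ℝ)..Real.sqrt x, r^(2*n-1) * Real.exp (-(c*r^2))
          ≤ 2*(n:ℝ) * ∫ r in (0:ℝ)..Real.sqrt x, r^(2*n-1) * Real.exp (-(c*(0:ℝ))) :=
            mul_le_mul_of_nonneg_left hmono h2n.le
        _ = x^n := by rw [hpowint 0]; simp; field_simp
  have hlow : Tendsto (fun x : ℝ => Real.exp (-(c*x))) (𝓝[>] 0) (𝓝 1) := by
    have h : Tendsto (fun x : ℝ => Real.exp (-(c*x))) (𝓝 0) (𝓝 1) := by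
      have := (Real.continuous_exp.comp (by continuity : Continuous fun x : ℝ => -(c*x))).tendsto 0
      simpa [Function.comp_def] using this
    exact h.mono_left nhdsWithin_le_nhds
  refine tendsto_of_tendsto_of_tendsto_of_le_of_le' hlow tendsto_const_nhds ?_ ?_
  · filter_upwards [self_mem_nhdsWithin] with x hx using (hineq x hx).1
  · filter_upwards [self_mem_nhdsWithin] with x hx using (hineq x hx).2

/-- Asymptote of the sub-FAS branch CDF (eq. (A.2)/(10c)): for `N ≥ 2` ports per branch,
Nakagami parameter `m ≥ 1`, average powers `Ω k > 0` and correlations `0 ≤ μ k < 1`,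
the branch CDF `F` satisfies `F(x) ~ a₀ x^(m N)` as `x → 0⁺`. -/
theorem subFAS_branch_CDF_asymp (N m : ℕ) (hN : 2 ≤ N) (hm : 1 ≤ m)
    (Ω : ℕ → ℝ) (hΩ : ∀ k, 1 ≤ k → k ≤ N → 0 < Ω k)
    (μ : ℕ → ℝ) (hμ : ∀ k, 2 ≤ k → k ≤ N → 0 ≤ μ k ∧ μ k < 1)
    (F : ℝ → ℝ)
    (hF : ∀ x > (0:ℝ),
      F x = 2 * (m : ℝ) ^ m / (Real.Gamma m * Ω 1 ^ (2 * m)) *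
        ∫ r in (0:ℝ)..Real.sqrt x,
          r ^ (2 * m - 1) * Real.exp (-(m : ℝ) * r ^ 2 / Ω 1 ^ 2) *
            ∏ k ∈ Finset.Icc 2 N,
              (((m : ℝ) * x / (Ω k ^ 2 * (1 - μ k ^ 2))) ^ m *
                Real.exp (-(m : ℝ) * μ k ^ 2 * r ^ 2 / (Ω 1 ^ 2 * (1 - μ k ^ 2))) /
                  (m.factorial : ℝ)))
    (a₀ : ℝ)
    (ha₀ : a₀ = (m : ℝ) ^ (m - 1) /
        (Real.Gamma m * Ω 1 ^ (2 * m) * (m.factorial : ℝ) ^ (N - 1)) *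
          ∏ k ∈ Finset.Icc 2 N, ((m : ℝ) / (Ω k ^ 2 * (1 - μ k ^ 2))) ^ m) :
    Tendsto (fun x : ℝ => F x / (a₀ * x ^ (m * N))) (𝓝[>] 0) (𝓝 1) := by
  have hΩ1 : 0 < Ω 1 := hΩ 1 le_rfl (by omega)
  have hmR : (0:ℝ) < (m:ℝ) := by exact_mod_cast Nat.pos_of_ne_zero (by omega)
  have hden : ∀ k ∈ Finset.Icc 2 N, 0 < Ω k ^ 2 * (1 - μ k ^ 2) := by
    intro k hk
    rw [Finset.mem_Icc] at hk
    have h1 := hΩ k (by omega) hk.2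
    have h2 := hμ k hk.1 hk.2
    have h3 : 0 < 1 - μ k ^ 2 := by nlinarith [h2.1, h2.2]
    exact mul_pos (by positivity) h3
  set S : Finset ℕ := Finset.Icc 2 N with hS
  set c : ℝ := (m:ℝ)/(Ω 1^2) + ∑ k ∈ S, (m:ℝ) * μ k ^ 2 / (Ω 1 ^ 2 * (1 - μ k ^ 2))
    with hc_def
  set K : ℝ := ∏ k ∈ S, ((m:ℝ) / (Ω k ^ 2 * (1 - μ k ^ 2))) ^ m with hK
  have hc : 0 ≤ c := by
    rw [hc_def]
    have h1 : 0 ≤ (m:ℝ)/(Ω 1^2) := by positivity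
    have h2 : 0 ≤ ∑ k ∈ S, (m:ℝ) * μ k ^ 2 / (Ω 1 ^ 2 * (1 - μ k ^ 2)) := by
      apply Finset.sum_nonneg
      intro k hk
      rw [Finset.mem_Icc] at hk
      have h2 := hμ k hk.1 hk.2
      have h3 : 0 < 1 - μ k ^ 2 := by nlinarith [h2.1, h2.2]
      positivity
    linarith
  have hKpos : 0 < K := by
    rw [hK]
    apply Finset.prod_pos
    intro k hk
    have := hden k hk
    positivity
  have hcard : S.card = N - 1 := by rw [hS, Nat.card_Icc]; omega
  -- pointwise integrand identity
  have hpt : ∀ x r : ℝ,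
      r ^ (2*m-1) * Real.exp (-(m:ℝ) * r^2 / Ω 1 ^ 2) *
        ∏ k ∈ S, (((m:ℝ) * x / (Ω k ^2 * (1 - μ k ^2)))^m *
          Real.exp (-(m:ℝ) * μ k ^2 * r^2 / (Ω 1 ^2 * (1 - μ k ^2))) / (m.factorial : ℝ))
      = (x^(m*(N-1)) * K / (m.factorial:ℝ)^(N-1)) * (r^(2*m-1) * Real.exp (-(c*r^2))) := by
    intro x r
    have e1 : ∏ k ∈ S, (((m:ℝ) * x / (Ω k ^2 * (1 - μ k ^2)))^m *
          Real.exp (-(m:ℝ) * μ k ^2 * r^2 / (Ω 1 ^2 * (1 - μ k ^2))) / (m.factorial : ℝ))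
        = ∏ k ∈ S, (((m:ℝ) / (Ω k ^2 * (1 - μ k ^2)))^m * x^m *
            (Real.exp (-(((m:ℝ) * μ k ^ 2 / (Ω 1 ^ 2 * (1 - μ k ^ 2))) * r^2)) / (m.factorial : ℝ))) := by
      apply Finset.prod_congr rfl
      intro k hk
      have h1 : (m:ℝ) * x / (Ω k ^2 * (1 - μ k ^2)) = (m:ℝ) / (Ω k ^2 * (1 - μ k ^2)) * x := by
        ring
      have h2 : -(m:ℝ) * μ k ^2 * r^2 / (Ω 1 ^2 * (1 - μ k ^2))
          = -(((m:ℝ) * μ k ^ 2 / (Ω 1 ^ 2 * (1 - μ k ^ 2))) * r^2) := by ring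
      rw [h1, mul_pow, h2]
      ring
    rw [e1, Finset.prod_mul_distrib, Finset.prod_mul_distrib, Finset.prod_const,
      Finset.prod_div_distrib, Finset.prod_const, ← hK, ← Real.exp_sum]
    have hsum : ∑ k ∈ S, -(((m:ℝ) * μ k ^ 2 / (Ω 1 ^ 2 * (1 - μ k ^ 2))) * r^2)
        = -((∑ k ∈ S, (m:ℝ) * μ k ^ 2 / (Ω 1 ^ 2 * (1 - μ k ^ 2))) * r^2) := by
      simp only [← neg_mul]
      rw [← Finset.sum_mul]
      congr 1
      simp only [Finset.sum_neg_distrib]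
    rw [hsum, hcard, ← pow_mul]
    have hexp : Real.exp (-(m:ℝ) * r^2 / Ω 1 ^ 2) *
        Real.exp (-((∑ k ∈ S, (m:ℝ) * μ k ^ 2 / (Ω 1 ^ 2 * (1 - μ k ^ 2))) * r^2))
        = Real.exp (-(c*r^2)) := by
      rw [← Real.exp_add]
      congr 1
      rw [hc_def]
      ring
    linear_combination (r^(2*m-1) * x^(m*(N-1)) * K / (m.factorial:ℝ)^(N-1)) * hexp
  -- nonzeroness
  have hΓ : 0 < Real.Gamma m := Real.Gamma_pos_of_pos hmR
  have hfact : (0:ℝ) < (m.factorial : ℝ) := by exact_mod_cast m.factorial_pos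
  have ha₀pos : 0 < a₀ := by
    rw [ha₀]
    exact mul_pos (div_pos (by positivity)
      (mul_pos (mul_pos hΓ (pow_pos hΩ1 _)) (pow_pos hfact _))) hKpos
  -- ratio identity
  have hratio : ∀ x : ℝ, 0 < x →
      F x / (a₀ * x ^ (m * N)) = (2*(m:ℝ)) *
        (∫ r in (0:ℝ)..Real.sqrt x, r^(2*m-1) * Real.exp (-(c*r^2))) / x^m := by
    intro x hx
    have hFx := hF x hx
    have hint : (∫ r in (0:ℝ)..Real.sqrt x,
        r ^ (2 * m - 1) * Real.exp (-(m : ℝ) * r ^ 2 / Ω 1 ^ 2) *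
          ∏ k ∈ S, (((m : ℝ) * x / (Ω k ^ 2 * (1 - μ k ^ 2))) ^ m *
            Real.exp (-(m : ℝ) * μ k ^ 2 * r ^ 2 / (Ω 1 ^ 2 * (1 - μ k ^ 2))) /
              (m.factorial : ℝ)))
        = (x^(m*(N-1)) * K / (m.factorial:ℝ)^(N-1)) *
          ∫ r in (0:ℝ)..Real.sqrt x, r^(2*m-1) * Real.exp (-(c*r^2)) := by
      rw [← intervalIntegral.integral_const_mul]
      apply intervalIntegral.integral_congr
      intro r _
      exact hpt x r
    rw [hFx, hint]
    have hmm : (m:ℝ)^m = (m:ℝ)^(m-1) * m := by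
      obtain ⟨m', hm'⟩ : ∃ m', m = m'+1 := ⟨m-1, by omega⟩
      subst hm'
      simp [pow_succ]
    have hxsplit : x^(m*N) = x^(m*(N-1)) * x^m := by
      rw [← pow_add]
      congr 1
      obtain ⟨n, hn⟩ : ∃ n, N = n+1 := ⟨N-1, by omega⟩
      subst hn
      simp [Nat.mul_succ]
    rw [ha₀, hxsplit, hmm]
    have h1 : Real.Gamma m ≠ 0 := ne_of_gt hΓ
    have h2 : Ω 1 ^ (2*m) ≠ 0 := by positivity
    have h3 : ((m.factorial:ℝ))^(N-1) ≠ 0 := by positivity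
    have h4 : K ≠ 0 := ne_of_gt hKpos
    have h5 : x ≠ 0 := ne_of_gt hx
    have h6 : (m:ℝ) ≠ 0 := ne_of_gt hmR
    have h7 : (m:ℝ)^(m-1) ≠ 0 := by positivity
    field_simp
  have hkey := key_asymp m hm c hc
  apply hkey.congr'
  filter_upwards [self_mem_nhdsWithin] with x hx
  exact (hratio x hx).symm
end

section
/- (Diversity order.) Let α > 0, β > 0 and γ_th > 0 be reals, and define P_out(s) = Υ(α, γ_th/(β s))/Γ(α) for s > 0. Then -log(P_out(s)) / log(s) → α as s → +∞; that is, the diversity order of the approximate MGC-FAS outage probability equals the shape parameter α. -/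
/-!
For `0 ≤ t ≤ x` we have `e^{-x} ≤ e^{-t} ≤ 1`, so `Υ(α, x)` lies between `e^{-x} x^α / α` and
`x^α / α`; hence `Υ(α, x) / x^α → 1 / α` as `x → 0⁺`. With `x = γ_th / (β s)` this gives
`-log P_out(s) = α log s + O(1)`, and dividing by `log s` leaves `α`.
-/

open Real Filter Topology MeasureTheory

/-- The lower incomplete gamma function `Υ(a, x) = ∫₀ˣ t^(a-1) e^(-t) dt`. -/
noncomputable def lowerIncGamma (a x : ℝ) : ℝ :=
  ∫ t in (0:ℝ)..x, t ^ (a - 1) * Real.exp (-t)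

variable {a x : ℝ}

theorem intervalIntegrable_rpow_sub_one_mul_exp_neg (ha : 0 < a) (hx : 0 ≤ x) :
    IntervalIntegrable (fun t : ℝ => t ^ (a - 1) * exp (-t)) volume 0 x := by
  rw [intervalIntegrable_iff_integrableOn_Ioc_of_le hx]
  simpa only [mul_comm] using (GammaIntegral_convergent ha).mono_set Set.Ioc_subset_Ioi_self

theorem integral_rpow_sub_one_eq_div (ha : 0 < a) :
    ∫ t in (0:ℝ)..x, t ^ (a - 1) = x ^ a / a := by
  rw [integral_rpow (Or.inl (by linarith)), sub_add_cancel, zero_rpow ha.ne', sub_zero]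

theorem lowerIncGamma_le (ha : 0 < a) (hx : 0 ≤ x) : lowerIncGamma a x ≤ x ^ a / a := by
  rw [← integral_rpow_sub_one_eq_div ha]
  refine intervalIntegral.integral_mono_on hx (intervalIntegrable_rpow_sub_one_mul_exp_neg ha hx)
    (intervalIntegral.intervalIntegrable_rpow' (by linarith)) fun t ht => ?_
  exact mul_le_of_le_one_right (rpow_nonneg ht.1 _) (exp_le_one_iff.2 (neg_nonpos.2 ht.1))

theorem exp_neg_mul_le_lowerIncGamma (ha : 0 < a) (hx : 0 ≤ x) :
    exp (-x) * (x ^ a / a) ≤ lowerIncGamma a x := by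
  rw [← integral_rpow_sub_one_eq_div ha, ← intervalIntegral.integral_const_mul]
  refine intervalIntegral.integral_mono_on hx
    ((intervalIntegral.intervalIntegrable_rpow' (by linarith)).const_mul _)
    (intervalIntegrable_rpow_sub_one_mul_exp_neg ha hx) fun t ht => ?_
  rw [mul_comm]
  exact mul_le_mul_of_nonneg_left (exp_le_exp.2 (neg_le_neg ht.2)) (rpow_nonneg ht.1 _)

theorem lowerIncGamma_pos (ha : 0 < a) (hx : 0 < x) : 0 < lowerIncGamma a x :=
  (by positivity : 0 < exp (-x) * (x ^ a / a)).trans_le (exp_neg_mul_le_lowerIncGamma ha hx.le)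

theorem tendsto_lowerIncGamma_div_rpow (ha : 0 < a) :
    Tendsto (fun x => lowerIncGamma a x / x ^ a) (𝓝[>] 0) (𝓝 (1 / a)) := by
  have hexp : Tendsto (fun x : ℝ => exp (-x) * (1 / a)) (𝓝[>] 0) (𝓝 (1 / a)) := by
    have := ((continuous_exp.comp continuous_neg).tendsto 0).mul_const (1 / a)
    simpa using this.mono_left nhdsWithin_le_nhds
  have hpos : ∀ᶠ x in 𝓝[>] (0:ℝ), 0 < x := self_mem_nhdsWithin
  refine tendsto_of_tendsto_of_tendsto_of_le_of_le' hexp tendsto_const_nhds ?_ ?_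
  · filter_upwards [hpos] with x hx
    calc exp (-x) * (1 / a) = exp (-x) * (x ^ a / a) / x ^ a := by
          field_simp [(rpow_pos_of_pos hx a).ne']
      _ ≤ lowerIncGamma a x / x ^ a := by
          gcongr; exact exp_neg_mul_le_lowerIncGamma ha hx.le
  · filter_upwards [hpos] with x hx
    calc lowerIncGamma a x / x ^ a ≤ x ^ a / a / x ^ a := by
          gcongr; exact lowerIncGamma_le ha hx.le
      _ = 1 / a := by field_simp [(rpow_pos_of_pos hx a).ne']

theorem tendsto_div_log_of_tendsto_sub_mul_log {f : ℝ → ℝ} {c : ℝ}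
    (h : Tendsto (fun s => f s - a * log s) atTop (𝓝 c)) :
    Tendsto (fun s => f s / log s) atTop (𝓝 a) := by
  have hlim : Tendsto (fun s => a + (f s - a * log s) * (log s)⁻¹) atTop (𝓝 (a + c * 0)) :=
    tendsto_const_nhds.add (h.mul (tendsto_inv_atTop_zero.comp tendsto_log_atTop))
  rw [mul_zero, add_zero] at hlim
  refine hlim.congr' ?_
  filter_upwards [eventually_gt_atTop 1] with s hs
  field_simp [(log_pos hs).ne']
  ring

/-- Diversity order: for `P_out(s) = Υ(α, γ_th/(β s))/Γ(α)`, the diversity order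
`-log(P_out(s))/log(s)` tends to the shape parameter `α` as `s → ∞`. -/
theorem diversity_order (α β γth : ℝ) (hα : 0 < α) (hβ : 0 < β) (hγ : 0 < γth)
    (Pout : ℝ → ℝ) (hPout : ∀ s > (0:ℝ), Pout s = lowerIncGamma α (γth / (β * s)) / Real.Gamma α) :
    Tendsto (fun s : ℝ => -Real.log (Pout s) / Real.log s) atTop (𝓝 α) := by
  set x : ℝ → ℝ := fun s => γth / (β * s)
  have hx : Tendsto x atTop (𝓝[>] 0) := by
    have : Tendsto (fun s => β * s / γth) atTop atTop :=
      (tendsto_id.const_mul_atTop hβ).atTop_div_const hγ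
    exact (tendsto_inv_atTop_nhdsGT_zero.comp this).congr fun s => by simp [x]
  have hratio : Tendsto (fun s => log (lowerIncGamma α (x s) / x s ^ α)) atTop (𝓝 (log (1 / α))) :=
    ((tendsto_lowerIncGamma_div_rpow hα).comp hx).log (by positivity)
  refine tendsto_div_log_of_tendsto_sub_mul_log
    (((tendsto_const_nhds (x := log (Gamma α) - α * (log γth - log β))).sub hratio).congr' ?_)
  filter_upwards [eventually_gt_atTop 0] with s hs
  have hxs : 0 < x s := by positivity
  have hlogx : log (x s) = log γth - log β - log s := by
    simp only [x]
    rw [log_div hγ.ne' (by positivity), log_mul hβ.ne' hs.ne']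
    ring
  rw [hPout s hs, log_div (lowerIncGamma_pos hα hxs).ne' (Gamma_pos_of_pos hα).ne',
    log_div (lowerIncGamma_pos hα hxs).ne' (rpow_pos_of_pos hxs α).ne', log_rpow hxs, hlogx]
  ring
end

section
/- (General convolution asymptote underlying the asymptotic-matching method.) Let a, b > 0 and c₁, c₂ > 0 be reals. Let f, g : ℝ → ℝ be nonnegative measurable functions vanishing on (-∞, 0], continuous on (0, ∞), such that f(x) ~ c₁ x^{a-1} and g(x) ~ c₂ x^{b-1} as x → 0⁺. Then the convolution h(x) = ∫₀ˣ f(t) g(x - t) dt satisfies h(x) ~ c₁ c₂ · (Γ(a) Γ(b) / Γ(a + b)) · x^{a + b - 1} as x → 0⁺. -/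
open Real Filter Topology MeasureTheory

lemma beta_cpow_eq {a b : ℝ} (x : ℝ) (hx0 : 0 ≤ x) (hx1 : x ≤ 1) :
    (x:ℂ) ^ ((a:ℂ) - 1) * ((1:ℂ) - x) ^ ((b:ℂ) - 1)
      = ((x ^ (a-1) * (1-x) ^ (b-1) : ℝ) : ℂ) := by
  have h1 : ((a:ℂ) - 1) = (((a-1 : ℝ)):ℂ) := by push_cast; ring
  have h2 : ((b:ℂ) - 1) = (((b-1 : ℝ)):ℂ) := by push_cast; ring
  have h3 : ((1:ℂ) - x) = (((1 - x : ℝ)):ℂ) := by push_cast; ring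
  rw [h1, h2, h3, ← Complex.ofReal_cpow hx0, ← Complex.ofReal_cpow (by linarith)]
  push_cast
  ring

lemma beta_integrable {a b : ℝ} (ha : 0 < a) (hb : 0 < b) :
    IntegrableOn (fun s : ℝ => s ^ (a-1) * (1-s) ^ (b-1)) (Set.Ioc 0 1) := by
  have h := (Complex.betaIntegral_convergent (u := a) (v := b) (by simpa) (by simpa))
  have h2 : IntervalIntegrable (fun x : ℝ => ((x ^ (a-1) * (1-x) ^ (b-1) : ℝ) : ℂ)) volume 0 1 := by
    refine h.congr ?_
    intro x hx
    have hx' : x ∈ Set.Ioc (0:ℝ) 1 := by simpa [Set.uIoc_of_le] using hx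
    exact beta_cpow_eq x hx'.1.le hx'.2
  have h3 : IntervalIntegrable (fun x : ℝ => x ^ (a-1) * (1-x) ^ (b-1)) volume 0 1 := by
    have := h2.norm
    refine this.congr ?_
    intro x hx
    have hx' : x ∈ Set.Ioc (0:ℝ) 1 := by simpa [Set.uIoc_of_le] using hx
    simp only [Complex.norm_real, Real.norm_eq_abs]
    exact abs_of_nonneg (mul_nonneg (Real.rpow_nonneg hx'.1.le _)
      (Real.rpow_nonneg (by linarith [hx'.2]) _))
  exact (intervalIntegrable_iff_integrableOn_Ioc_of_le zero_le_one).mp h3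

lemma beta_value {a b : ℝ} (ha : 0 < a) (hb : 0 < b) :
    ∫ s in (0:ℝ)..1, s ^ (a-1) * (1-s) ^ (b-1)
      = Real.Gamma a * Real.Gamma b / Real.Gamma (a+b) := by
  have h := Complex.Gamma_mul_Gamma_eq_betaIntegral (s := a) (t := b) (by simpa) (by simpa)
  have hval : Complex.betaIntegral a b = ((∫ s in (0:ℝ)..1, s ^ (a-1) * (1-s) ^ (b-1) : ℝ) : ℂ) := by
    rw [Complex.betaIntegral, ← intervalIntegral.integral_ofReal]
    refine intervalIntegral.integral_congr fun x hx => ?_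
    rw [Set.uIcc_of_le zero_le_one] at hx
    exact beta_cpow_eq x hx.1 hx.2
  rw [hval, ← Complex.ofReal_add a b, Complex.Gamma_ofReal, Complex.Gamma_ofReal,
    Complex.Gamma_ofReal, ← Complex.ofReal_mul, ← Complex.ofReal_mul] at h
  have h' := Complex.ofReal_injective h
  have hG : Real.Gamma (a+b) ≠ 0 := (Real.Gamma_pos_of_pos (by linarith)).ne'
  field_simp
  linarith [h']

/-- Extract a pointwise power-law upper bound from the asymptotic hypothesis. -/
lemma upper_bound_of_asymp {c r : ℝ} (hc : 0 < c) {f : ℝ → ℝ}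
    (h : Tendsto (fun x : ℝ => f x / (c * x ^ r)) (𝓝[>] 0) (𝓝 1)) :
    ∃ δ > 0, ∀ t ∈ Set.Ioo (0:ℝ) δ, f t ≤ 2 * (c * t ^ r) := by
  have h2 := h.eventually_lt_const (by norm_num : (1:ℝ) < 2)
  rw [eventually_nhdsWithin_iff, Metric.eventually_nhds_iff] at h2
  obtain ⟨δ, hδ, hδ'⟩ := h2
  refine ⟨δ, hδ, fun t ht => ?_⟩
  have hpos : 0 < c * t ^ r := mul_pos hc (Real.rpow_pos_of_pos ht.1 _)
  have := hδ' (show dist t 0 < δ by simpa [Real.dist_eq, abs_of_pos ht.1] using ht.2) ht.1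
  rw [div_lt_iff₀ hpos] at this
  linarith


/-- General convolution asymptote: if `f(x) ~ c₁ x^(a-1)` and `g(x) ~ c₂ x^(b-1)` as
`x → 0⁺`, for nonnegative measurable `f, g` vanishing on `(-∞, 0]` and continuous on
`(0, ∞)`, then `∫₀ˣ f(t) g(x-t) dt ~ c₁ c₂ (Γ(a)Γ(b)/Γ(a+b)) x^(a+b-1)` as `x → 0⁺`. -/
theorem convolution_power_law_asymp (a b c₁ c₂ : ℝ)
    (ha : 0 < a) (hb : 0 < b) (hc₁ : 0 < c₁) (hc₂ : 0 < c₂)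
    (f g : ℝ → ℝ)
    (hf_nonneg : ∀ x, 0 ≤ f x) (hg_nonneg : ∀ x, 0 ≤ g x)
    (hf_meas : Measurable f) (hg_meas : Measurable g)
    (hf_zero : ∀ x ≤ (0:ℝ), f x = 0) (hg_zero : ∀ x ≤ (0:ℝ), g x = 0)
    (hf_cont : ContinuousOn f (Set.Ioi 0)) (hg_cont : ContinuousOn g (Set.Ioi 0))
    (hf_asymp : Tendsto (fun x : ℝ => f x / (c₁ * x ^ (a - 1))) (𝓝[>] 0) (𝓝 1))
    (hg_asymp : Tendsto (fun x : ℝ => g x / (c₂ * x ^ (b - 1))) (𝓝[>] 0) (𝓝 1)) :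
    Tendsto
      (fun x : ℝ =>
        (∫ t in (0:ℝ)..x, f t * g (x - t)) /
          (c₁ * c₂ * (Real.Gamma a * Real.Gamma b / Real.Gamma (a + b)) * x ^ (a + b - 1)))
      (𝓝[>] 0) (𝓝 1) := by
  set B : ℝ := Real.Gamma a * Real.Gamma b / Real.Gamma (a + b) with hBdef
  have hB : 0 < B := div_pos (mul_pos (Real.Gamma_pos_of_pos ha) (Real.Gamma_pos_of_pos hb))
    (Real.Gamma_pos_of_pos (by linarith))
  set K : ℝ := c₁ * c₂ * B with hKdef
  have hK : 0 < K := mul_pos (mul_pos hc₁ hc₂) hB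
  obtain ⟨δ₁, hδ₁, hfb⟩ := upper_bound_of_asymp hc₁ hf_asymp
  obtain ⟨δ₂, hδ₂, hgb⟩ := upper_bound_of_asymp hc₂ hg_asymp
  set δ : ℝ := min δ₁ δ₂ with hδdef
  have hδ : 0 < δ := lt_min hδ₁ hδ₂
  set F : ℝ → ℝ → ℝ := fun x s => f (x * s) * g (x - x * s) / x ^ (a + b - 2) with hFdef
  -- the key dominated convergence step
  have key : Tendsto (fun x : ℝ => ∫ s in Set.Ioo (0:ℝ) 1, F x s) (𝓝[>] 0)
      (𝓝 (∫ s in Set.Ioo (0:ℝ) 1, c₁ * c₂ * (s ^ (a-1) * (1-s) ^ (b-1)))) := by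
    refine tendsto_integral_filter_of_dominated_convergence
      (fun s => 4 * c₁ * c₂ * (s ^ (a-1) * (1-s) ^ (b-1))) ?_ ?_ ?_ ?_
    · refine Eventually.of_forall fun x => ?_
      have : Measurable (F x) := by
        apply Measurable.div_const
        exact ((hf_meas.comp (measurable_id.const_mul x)).mul
          (hg_meas.comp (measurable_const.sub (measurable_id.const_mul x))))
      exact this.aestronglyMeasurable
    · filter_upwards [Ioo_mem_nhdsGT_of_mem (Set.mem_Ico.mpr ⟨le_refl 0, hδ⟩)] with x hx
      refine (ae_restrict_mem measurableSet_Ioo).mono fun s hs => ?_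
      have hx0 : 0 < x := hx.1
      have hs0 : 0 < s := hs.1
      have hs1 : s < 1 := hs.2
      have hxp : 0 < x ^ (a + b - 2) := Real.rpow_pos_of_pos hx0 _
      have hu : x * s ∈ Set.Ioo 0 δ₁ := by
        constructor
        · positivity
        · calc x * s < x * 1 := by nlinarith
          _ = x := mul_one x
          _ < δ₁ := lt_of_lt_of_le hx.2 (min_le_left _ _)
      have hv : x - x * s ∈ Set.Ioo 0 δ₂ := by
        constructor
        · nlinarith
        · calc x - x * s ≤ x := by nlinarith
          _ < δ₂ := lt_of_lt_of_le hx.2 (min_le_right _ _)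
      have hFnn : 0 ≤ F x s := by
        apply div_nonneg (mul_nonneg (hf_nonneg _) (hg_nonneg _)) hxp.le
      rw [Real.norm_eq_abs, abs_of_nonneg hFnn]
      have hprod : f (x * s) * g (x - x * s)
          ≤ 4 * c₁ * c₂ * (s ^ (a-1) * (1-s) ^ (b-1)) * x ^ (a + b - 2) := by
        have h1 := hfb _ hu
        have h2 := hgb _ hv
        have e1 : (x * s) ^ (a-1) = x ^ (a-1) * s ^ (a-1) :=
          Real.mul_rpow hx0.le hs0.le
        have e2 : (x - x * s) = x * (1 - s) := by ring
        have e3 : (x * (1-s)) ^ (b-1) = x ^ (b-1) * (1-s) ^ (b-1) :=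
          Real.mul_rpow hx0.le (by linarith)
        have e4 : x ^ (a-1) * x ^ (b-1) = x ^ (a + b - 2) := by
          rw [← Real.rpow_add hx0]; ring_nf
        calc f (x * s) * g (x - x * s)
            ≤ (2 * (c₁ * (x * s) ^ (a-1))) * (2 * (c₂ * (x - x * s) ^ (b-1))) := by
              apply mul_le_mul h1 h2 (hg_nonneg _) (by positivity)
          _ = 4 * c₁ * c₂ * (s ^ (a-1) * (1-s) ^ (b-1)) * (x ^ (a-1) * x ^ (b-1)) := by
              rw [e1, e2, e3]; ring
          _ = _ := by rw [e4]
      rw [hFdef]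
      simp only
      rw [div_le_iff₀ hxp]
      exact hprod
    · refine Integrable.const_mul ?_ (4 * c₁ * c₂)
      exact (beta_integrable ha hb).mono_set Set.Ioo_subset_Ioc_self
    · refine (ae_restrict_mem measurableSet_Ioo).mono fun s hs => ?_
      have hs0 : 0 < s := hs.1
      have hs1 : s < 1 := hs.2
      have hmul : Tendsto (fun x : ℝ => x * s) (𝓝[>] 0) (𝓝[>] 0) := by
        apply tendsto_nhdsWithin_of_tendsto_nhds_of_eventually_within
        · have : Tendsto (fun x : ℝ => x * s) (𝓝 0) (𝓝 0) := by
            simpa using (continuous_mul_right s).tendsto 0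
          exact this.mono_left nhdsWithin_le_nhds
        · filter_upwards [self_mem_nhdsWithin] with x hx
          exact mul_pos hx hs0
      have hmul2 : Tendsto (fun x : ℝ => x - x * s) (𝓝[>] 0) (𝓝[>] 0) := by
        apply tendsto_nhdsWithin_of_tendsto_nhds_of_eventually_within
        · have : Tendsto (fun x : ℝ => x - x * s) (𝓝 0) (𝓝 0) := by
            have : Continuous (fun x : ℝ => x - x * s) := by continuity
            simpa using this.tendsto 0
          exact this.mono_left nhdsWithin_le_nhds
        · filter_upwards [self_mem_nhdsWithin] with x hx
          have : (0:ℝ) < x * (1 - s) := mul_pos hx (by linarith)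
          simp only [Set.mem_Ioi]; linarith
      have h1 := hf_asymp.comp hmul
      have h2 := hg_asymp.comp hmul2
      have hbase : Tendsto (fun x : ℝ =>
          c₁ * c₂ * (s ^ (a-1) * (1-s) ^ (b-1)) *
            ((f (x * s) / (c₁ * (x * s) ^ (a-1))) *
              (g (x - x * s) / (c₂ * (x - x * s) ^ (b-1))))) (𝓝[>] 0)
          (𝓝 (c₁ * c₂ * (s ^ (a-1) * (1-s) ^ (b-1)))) := by
        have := tendsto_const_nhds (x := c₁ * c₂ * (s ^ (a-1) * (1-s) ^ (b-1)))
          (f := 𝓝[>] (0:ℝ)) |>.mul (h1.mul h2)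
        simpa using this
      refine Tendsto.congr' ?_ hbase
      filter_upwards [self_mem_nhdsWithin] with x hx
      have hx0 : 0 < x := hx
      have e1 : (x * s) ^ (a-1) = x ^ (a-1) * s ^ (a-1) := Real.mul_rpow hx0.le hs0.le
      have e2 : (x - x * s) = x * (1 - s) := by ring
      have e3 : (x * (1-s)) ^ (b-1) = x ^ (b-1) * (1-s) ^ (b-1) :=
        Real.mul_rpow hx0.le (by linarith)
      have e4 : x ^ (a + b - 2) = x ^ (a-1) * x ^ (b-1) := by
        rw [← Real.rpow_add hx0]; ring_nf
      have hxa : x ^ (a-1) ≠ 0 := (Real.rpow_pos_of_pos hx0 _).ne'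
      have hxb : x ^ (b-1) ≠ 0 := (Real.rpow_pos_of_pos hx0 _).ne'
      have hsa : s ^ (a-1) ≠ 0 := (Real.rpow_pos_of_pos hs0 _).ne'
      have hsb : (1-s) ^ (b-1) ≠ 0 := (Real.rpow_pos_of_pos (by linarith) _).ne'
      rw [hFdef]
      simp only
      rw [e1, e2, e3, e4]
      field_simp
  -- identify the limit value
  have hlimval : (∫ s in Set.Ioo (0:ℝ) 1, c₁ * c₂ * (s ^ (a-1) * (1-s) ^ (b-1))) = K := by
    rw [← MeasureTheory.integral_Ioc_eq_integral_Ioo,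
      ← intervalIntegral.integral_of_le zero_le_one,
      intervalIntegral.integral_const_mul, beta_value ha hb, hKdef, hBdef]
  rw [hlimval] at key
  have final : Tendsto (fun x : ℝ => (∫ s in Set.Ioo (0:ℝ) 1, F x s) / K) (𝓝[>] 0) (𝓝 1) := by
    have := key.div_const K
    rwa [div_self hK.ne'] at this
  refine Tendsto.congr' ?_ final
  filter_upwards [self_mem_nhdsWithin] with x hx
  have hx0 : 0 < x := hx
  have hsub : (∫ t in (0:ℝ)..x, f t * g (x - t))
      = x * ∫ s in (0:ℝ)..1, f (x * s) * g (x - x * s) := by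
    have h := intervalIntegral.smul_integral_comp_mul_left
      (f := fun t => f t * g (x - t)) (a := 0) (b := 1) x
    simp only [mul_zero, mul_one, smul_eq_mul] at h
    rw [← h]
  have hF : (∫ s in Set.Ioo (0:ℝ) 1, F x s)
      = (∫ s in (0:ℝ)..1, f (x * s) * g (x - x * s)) / x ^ (a + b - 2) := by
    rw [← MeasureTheory.integral_Ioc_eq_integral_Ioo,
      ← intervalIntegral.integral_of_le zero_le_one, hFdef]
    simp only
    rw [intervalIntegral.integral_div]
  have hxx : x ^ (a + b - 1) = x ^ (a + b - 2) * x := by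
    rw [show a + b - 1 = (a + b - 2) + 1 by ring, Real.rpow_add_one hx0.ne']
  have hxp : x ^ (a + b - 2) ≠ 0 := (Real.rpow_pos_of_pos hx0 _).ne'
  rw [hF, hsub, hxx]
  field_simp
end

section
/- (Small-x asymptote of the CDF of a sum of independent Gamma variables, eq. (A.5) integrated.) Let M ≥ 1 be a natural number and, for j = 1, …, M, let α_j > 0 and r_j > 0 be reals. Let X₁, …, X_M be independent real random variables on a probability space, where X_j has the Gamma distribution with shape α_j and rate r_j (density r_j^{α_j} x^{α_j - 1} e^{- r_j x}/Γ(α_j) on x > 0). Set A = Σ_{j=1}^M α_j. Then P(Σ_{j=1}^M X_j ≤ x) ~ (∏_{j=1}^M r_j^{α_j}) · x^A / (A · Γ(A)) as x → 0⁺. -/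
open Real Filter Topology MeasureTheory ProbabilityTheory



lemma real_beta_integral {a b x : ℝ} (ha : 0 < a) (hb : 0 < b) (hx : 0 < x) :
    ∫ t in (0:ℝ)..x, t ^ (a - 1) * (x - t) ^ (b - 1) =
      x ^ (a + b - 1) * (Real.Gamma a * Real.Gamma b / Real.Gamma (a + b)) := by
  have hG : Complex.Gamma (a + b) ≠ 0 := by
    rw [show ((a:ℂ) + b) = ((a + b : ℝ) : ℂ) by push_cast; ring, Complex.Gamma_ofReal]
    exact_mod_cast (Real.Gamma_pos_of_pos (by linarith)).ne'
  have hbeta : Complex.betaIntegral a b =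
      ((Real.Gamma a * Real.Gamma b / Real.Gamma (a + b) : ℝ) : ℂ) := by
    have h2 := Complex.Gamma_mul_Gamma_eq_betaIntegral (s := (a:ℂ)) (t := (b:ℂ))
      (by simpa using ha) (by simpa using hb)
    rw [show ((a:ℂ) + b) = ((a + b : ℝ) : ℂ) by push_cast; ring,
      Complex.Gamma_ofReal, Complex.Gamma_ofReal, Complex.Gamma_ofReal] at h2
    have hne : ((Real.Gamma (a + b) : ℝ) : ℂ) ≠ 0 :=
      Complex.ofReal_ne_zero.mpr (Real.Gamma_pos_of_pos (by linarith)).ne'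
    rw [Complex.ofReal_div, Complex.ofReal_mul, eq_div_iff hne]
    linear_combination -h2
  have h1 := Complex.betaIntegral_scaled (a : ℂ) (b : ℂ) hx
  have key : ((∫ t in (0:ℝ)..x, t ^ (a - 1) * (x - t) ^ (b - 1) : ℝ) : ℂ) =
      ((x ^ (a + b - 1) * (Real.Gamma a * Real.Gamma b / Real.Gamma (a + b)) : ℝ) : ℂ) := by
    rw [← intervalIntegral.integral_ofReal]
    have heq : ∀ t ∈ Set.uIcc (0:ℝ) x,
        ((t ^ (a - 1) * (x - t) ^ (b - 1) : ℝ) : ℂ) =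
          (t : ℂ) ^ ((a:ℂ) - 1) * ((x : ℂ) - t) ^ ((b:ℂ) - 1) := by
      intro t ht
      rw [Set.uIcc_of_le hx.le] at ht
      obtain ⟨ht0, htx⟩ := ht
      rw [Complex.ofReal_mul, Complex.ofReal_cpow ht0,
        Complex.ofReal_cpow (by linarith : (0:ℝ) ≤ x - t)]
      push_cast
      ring
    rw [intervalIntegral.integral_congr heq, h1, hbeta]
    rw [show ((a:ℂ) + b - 1) = ((a + b - 1 : ℝ) : ℂ) by push_cast; ring,
      ← Complex.ofReal_cpow hx.le]
    push_cast
    ring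
  exact_mod_cast key


/-- The CDF bound predicate we propagate by induction. -/
def goodCDF (ν : Measure ℝ) (A c R : ℝ) : Prop :=
  (∀ x : ℝ, x < 0 → ν (Set.Iic x) = 0) ∧
  ∀ x : ℝ, 0 ≤ x →
    c * x ^ A * Real.exp (-(R * x)) ≤ (ν (Set.Iic x)).toReal ∧
    (ν (Set.Iic x)).toReal ≤ c * x ^ A

lemma goodCDF_dirac : goodCDF (Measure.dirac 0) 0 1 0 := by
  constructor
  · intro x hx
    rw [Measure.dirac_apply' _ measurableSet_Iic]
    simp [Set.indicator, hx.not_ge]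
  · intro x hx
    rw [Measure.dirac_apply' _ measurableSet_Iic]
    simp [Set.indicator_of_mem, hx, Real.rpow_zero]

lemma goodCDF_conv {ν : Measure ℝ} [IsProbabilityMeasure ν] {a r A R p : ℝ}
    (ha : 0 < a) (hr : 0 < r) (hA : 0 ≤ A) (hR : 0 ≤ R) (hp : 0 < p)
    (hgood : goodCDF ν A (p / Real.Gamma (A + 1)) R) :
    goodCDF (Measure.map (fun q : ℝ × ℝ => q.1 + q.2) ((gammaMeasure a r).prod ν))
      (a + A) (p * r ^ a / Real.Gamma (a + A + 1)) (r + R) := by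
  haveI := isProbabilityMeasure_gammaMeasure ha hr
  set c : ℝ := p / Real.Gamma (A + 1) with hc_def
  have hGA : 0 < Real.Gamma (A + 1) := Real.Gamma_pos_of_pos (by linarith)
  have hGa : 0 < Real.Gamma a := Real.Gamma_pos_of_pos ha
  have hGaA : 0 < Real.Gamma (a + A + 1) := Real.Gamma_pos_of_pos (by linarith)
  have hc : 0 < c := div_pos hp hGA
  set k : ℝ := r ^ a / Real.Gamma a with hk_def
  have hk : 0 < k := div_pos (Real.rpow_pos_of_pos hr a) hGa
  have hadd : Measurable fun q : ℝ × ℝ => q.1 + q.2 := measurable_fst.add measurable_snd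
  have hνmeas : ∀ x : ℝ, Measurable fun t : ℝ => ν (Set.Iic (x - t)) := by
    intro x
    have hm : Monotone fun y : ℝ => ν (Set.Iic y) :=
      fun y z h => measure_mono (Set.Iic_subset_Iic.mpr h)
    exact hm.measurable.comp (measurable_const.sub measurable_id)
  have key : ∀ x : ℝ, (Measure.map (fun q : ℝ × ℝ => q.1 + q.2)
      ((gammaMeasure a r).prod ν)) (Set.Iic x)
      = ∫⁻ t, gammaPDF a r t * ν (Set.Iic (x - t)) := by
    intro x
    rw [Measure.map_apply hadd measurableSet_Iic,
      Measure.prod_apply (hadd measurableSet_Iic)]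
    have hsl : ∀ t : ℝ,
        (Prod.mk t ⁻¹' ((fun q : ℝ × ℝ => q.1 + q.2) ⁻¹' Set.Iic x)) = Set.Iic (x - t) := by
      intro t
      ext s
      simp only [Set.mem_preimage, Set.mem_Iic]
      constructor <;> intro h <;> linarith
    simp_rw [hsl]
    have hpdfm : Measurable (gammaPDF a r) := (measurable_gammaPDFReal a r).ennreal_ofReal
    rw [gammaMeasure, lintegral_withDensity_eq_lintegral_mul _ hpdfm (hνmeas x)]
    rfl
  constructor
  · -- x < 0
    intro x hx
    have h0 : ∀ t : ℝ, gammaPDF a r t * ν (Set.Iic (x - t)) = 0 := by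
      intro t
      rcases lt_or_ge t 0 with ht | ht
      · rw [gammaPDF_of_neg ht, zero_mul]
      · rw [hgood.1 (x - t) (by linarith), mul_zero]
    rw [key x, lintegral_congr h0, lintegral_zero]
  · -- 0 ≤ x
    intro x hx
    have hne : (Measure.map (fun q : ℝ × ℝ => q.1 + q.2)
        ((gammaMeasure a r).prod ν)) (Set.Iic x) ≠ ⊤ := measure_ne_top _ _
    have hicc : ∀ t : ℝ, gammaPDF a r t * ν (Set.Iic (x - t)) =
        (Set.Icc 0 x).indicator (fun t => gammaPDF a r t * ν (Set.Iic (x - t))) t := by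
      intro t
      by_cases htm : t ∈ Set.Icc 0 x
      · rw [Set.indicator_of_mem htm]
      · rw [Set.indicator_of_notMem htm]
        rw [Set.mem_Icc, not_and_or] at htm
        rcases htm with h | h
        · rw [gammaPDF_of_neg (lt_of_not_ge h), zero_mul]
        · rw [hgood.1 (x - t) (by push_neg at h; linarith), mul_zero]
    have keyI : (Measure.map (fun q : ℝ × ℝ => q.1 + q.2)
        ((gammaMeasure a r).prod ν)) (Set.Iic x)
        = ∫⁻ t in Set.Icc 0 x, gammaPDF a r t * ν (Set.Iic (x - t)) := by
      rw [key x, lintegral_congr hicc, lintegral_indicator measurableSet_Icc]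
    rcases eq_or_lt_of_le hx with rfl | hx0
    · -- x = 0
      have hz : (Measure.map (fun q : ℝ × ℝ => q.1 + q.2)
          ((gammaMeasure a r).prod ν)) (Set.Iic 0) = 0 := by
        rw [keyI, Set.Icc_self, setLIntegral_measure_zero _ _ (by simp)]
      rw [hz]
      have h0 : (0:ℝ) ^ (a + A) = 0 := Real.zero_rpow (by positivity)
      simp [h0]
    · -- 0 < x
      have hcont : Continuous fun t : ℝ => (x - t) ^ A :=
        (continuous_const.sub continuous_id).rpow_const (fun t => Or.inr hA)
      have hint : IntegrableOn (fun t : ℝ => t ^ (a - 1) * (x - t) ^ A)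
          (Set.Icc 0 x) volume := by
        have h1 : IntervalIntegrable (fun t : ℝ => t ^ (a - 1)) volume 0 x :=
          intervalIntegral.intervalIntegrable_rpow' (by linarith)
        have h2 := h1.mul_continuousOn hcont.continuousOn
        rwa [intervalIntegrable_iff_integrableOn_Icc_of_le hx] at h2
      have hBI : ∫ t in Set.Icc 0 x, t ^ (a - 1) * (x - t) ^ A =
          x ^ (a + A) * (Real.Gamma a * Real.Gamma (A + 1) / Real.Gamma (a + A + 1)) := by
        rw [MeasureTheory.integral_Icc_eq_integral_Ioc,
          ← intervalIntegral.integral_of_le hx]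
        have hb := real_beta_integral ha (by linarith : (0:ℝ) < A + 1) hx0
        rw [show A + 1 - 1 = A by ring, show a + (A + 1) - 1 = a + A by ring,
          show a + (A + 1) = a + A + 1 by ring] at hb
        exact hb
      -- upper bound
      have hub : (Measure.map (fun q : ℝ × ℝ => q.1 + q.2)
          ((gammaMeasure a r).prod ν)) (Set.Iic x)
          ≤ ENNReal.ofReal (∫ t in Set.Icc 0 x, (k * c) * (t ^ (a - 1) * (x - t) ^ A)) := by
        rw [keyI, MeasureTheory.ofReal_integral_eq_lintegral_ofReal
          ((hint.const_mul (k * c)))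
          ((ae_restrict_iff' measurableSet_Icc).mpr (ae_of_all _ (fun t ht => by
            have := ht.1; have := ht.2
            have h1 : (0:ℝ) ≤ t ^ (a-1) := Real.rpow_nonneg ht.1 _
            have h2 : (0:ℝ) ≤ (x - t) ^ A := Real.rpow_nonneg (by linarith) _
            positivity)))]
        apply setLIntegral_mono' measurableSet_Icc
        intro t ht
        obtain ⟨ht0, htx⟩ := ht
        have h1 : (0:ℝ) ≤ t ^ (a-1) := Real.rpow_nonneg ht0 _
        have h2 : (0:ℝ) ≤ (x - t) ^ A := Real.rpow_nonneg (by linarith) _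
        have hpdf : gammaPDF a r t ≤ ENNReal.ofReal (k * t ^ (a - 1)) := by
          rw [gammaPDF_of_nonneg ht0]
          apply ENNReal.ofReal_le_ofReal
          have : Real.exp (-(r * t)) ≤ 1 := Real.exp_le_one_iff.mpr (by nlinarith)
          calc r ^ a / Real.Gamma a * t ^ (a-1) * Real.exp (-(r * t))
              ≤ r ^ a / Real.Gamma a * t ^ (a-1) * 1 := by
                apply mul_le_mul_of_nonneg_left this
                positivity
            _ = k * t ^ (a-1) := by rw [mul_one]
        have hν : ν (Set.Iic (x - t)) ≤ ENNReal.ofReal (c * (x - t) ^ A) := by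
          rw [← ENNReal.ofReal_toReal (measure_ne_top ν (Set.Iic (x - t)))]
          exact ENNReal.ofReal_le_ofReal ((hgood.2 (x - t) (by linarith)).2)
        calc gammaPDF a r t * ν (Set.Iic (x - t))
            ≤ ENNReal.ofReal (k * t ^ (a-1)) * ENNReal.ofReal (c * (x - t) ^ A) :=
              mul_le_mul' hpdf hν
          _ = ENNReal.ofReal ((k * t ^ (a-1)) * (c * (x - t) ^ A)) :=
              (ENNReal.ofReal_mul (by positivity)).symm
          _ = ENNReal.ofReal ((k * c) * (t ^ (a-1) * (x - t) ^ A)) := by ring_nf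
      -- lower bound
      have hlb : ENNReal.ofReal (∫ t in Set.Icc 0 x,
            (Real.exp (-((r + R) * x)) * (k * c)) * (t ^ (a - 1) * (x - t) ^ A))
          ≤ (Measure.map (fun q : ℝ × ℝ => q.1 + q.2)
            ((gammaMeasure a r).prod ν)) (Set.Iic x) := by
        rw [keyI, MeasureTheory.ofReal_integral_eq_lintegral_ofReal
          ((hint.const_mul _))
          ((ae_restrict_iff' measurableSet_Icc).mpr (ae_of_all _ (fun t ht => by
            have h1 : (0:ℝ) ≤ t ^ (a-1) := Real.rpow_nonneg ht.1 _
            have h2 : (0:ℝ) ≤ (x - t) ^ A := Real.rpow_nonneg (by linarith [ht.2]) _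
            positivity)))]
        apply setLIntegral_mono' measurableSet_Icc
        intro t ht
        obtain ⟨ht0, htx⟩ := ht
        have h1 : (0:ℝ) ≤ t ^ (a-1) := Real.rpow_nonneg ht0 _
        have h2 : (0:ℝ) ≤ (x - t) ^ A := Real.rpow_nonneg (by linarith) _
        have hpdf : ENNReal.ofReal ((k * t ^ (a - 1)) * Real.exp (-(r * x)))
            ≤ gammaPDF a r t := by
          rw [gammaPDF_of_nonneg ht0]
          apply ENNReal.ofReal_le_ofReal
          have hee : Real.exp (-(r * x)) ≤ Real.exp (-(r * t)) :=
            Real.exp_le_exp.mpr (by nlinarith)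
          calc k * t ^ (a-1) * Real.exp (-(r * x))
              ≤ k * t ^ (a-1) * Real.exp (-(r * t)) := by
                apply mul_le_mul_of_nonneg_left hee; positivity
            _ = r ^ a / Real.Gamma a * t ^ (a-1) * Real.exp (-(r * t)) := by rw [hk_def]
        have hν : ENNReal.ofReal ((c * (x - t) ^ A) * Real.exp (-(R * x)))
            ≤ ν (Set.Iic (x - t)) := by
          rw [← ENNReal.ofReal_toReal (measure_ne_top ν (Set.Iic (x - t)))]
          apply ENNReal.ofReal_le_ofReal
          have h3 := (hgood.2 (x - t) (by linarith)).1
          refine le_trans ?_ h3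
          apply mul_le_mul_of_nonneg_left _ (by positivity)
          exact Real.exp_le_exp.mpr (by nlinarith)
        calc ENNReal.ofReal ((Real.exp (-((r + R) * x)) * (k * c))
              * (t ^ (a-1) * (x - t) ^ A))
            = ENNReal.ofReal (((k * t ^ (a - 1)) * Real.exp (-(r * x)))
              * ((c * (x - t) ^ A) * Real.exp (-(R * x)))) := by
              rw [show -((r + R) * x) = -(r * x) + -(R * x) by ring, Real.exp_add]
              ring_nf
          _ = ENNReal.ofReal ((k * t ^ (a - 1)) * Real.exp (-(r * x)))
              * ENNReal.ofReal ((c * (x - t) ^ A) * Real.exp (-(R * x))) :=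
              ENNReal.ofReal_mul (by positivity)
          _ ≤ gammaPDF a r t * ν (Set.Iic (x - t)) := mul_le_mul' hpdf hν
      rw [MeasureTheory.integral_const_mul, hBI] at hub hlb
      constructor
      · have := (ENNReal.ofReal_le_iff_le_toReal hne).mp hlb
        refine le_trans (le_of_eq ?_) this
        rw [hc_def, hk_def]
        field_simp
      · refine le_trans (ENNReal.toReal_le_of_le_ofReal (by positivity) hub) (le_of_eq ?_)
        rw [hc_def, hk_def]
        field_simp

lemma goodCDF_sum {Ω : Type*} [MeasurableSpace Ω] (μ : Measure Ω) [IsProbabilityMeasure μ]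
    {M : ℕ} (α r : Fin M → ℝ) (hα : ∀ j, 0 < α j) (hr : ∀ j, 0 < r j)
    (X : Fin M → Ω → ℝ) (hX : ∀ j, Measurable (X j))
    (hindep : iIndepFun X μ)
    (hdist : ∀ j, μ.map (X j) = gammaMeasure (α j) (r j))
    (s : Finset (Fin M)) :
    goodCDF (μ.map (fun ω => ∑ j ∈ s, X j ω)) (∑ j ∈ s, α j)
      ((∏ j ∈ s, r j ^ α j) / Real.Gamma ((∑ j ∈ s, α j) + 1)) (∑ j ∈ s, r j) := by
  classical
  induction s using Finset.induction_on with
  | empty =>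
    simp only [Finset.sum_empty, Finset.prod_empty]
    rw [show (fun _ : Ω => (0:ℝ)) = fun _ : Ω => (0:ℝ) from rfl, Measure.map_const,
      measure_univ, one_smul]
    simpa [Real.Gamma_one] using goodCDF_dirac
  | @insert i s hi ih =>
    have hS : Measurable fun ω => ∑ j ∈ s, X j ω :=
      Finset.measurable_sum s (fun j _ => hX j)
    have hadd : Measurable fun q : ℝ × ℝ => q.1 + q.2 := measurable_fst.add measurable_snd
    have hind : IndepFun (X i) (fun ω => ∑ j ∈ s, X j ω) μ := by
      have h := (hindep.indepFun_finsetSum_of_notMem hX hi).symm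
      have he : (∑ j ∈ s, X j) = fun ω => ∑ j ∈ s, X j ω := by
        funext ω; rw [Finset.sum_apply]
      rwa [he] at h
    have hmap : μ.map (fun ω => ∑ j ∈ insert i s, X j ω)
        = Measure.map (fun q : ℝ × ℝ => q.1 + q.2)
          ((gammaMeasure (α i) (r i)).prod (μ.map (fun ω => ∑ j ∈ s, X j ω))) := by
      have h1 : μ.map (fun ω => (X i ω, ∑ j ∈ s, X j ω))
          = (μ.map (X i)).prod (μ.map (fun ω => ∑ j ∈ s, X j ω)) :=
        (indepFun_iff_map_prod_eq_prod_map_map (hX i).aemeasurable hS.aemeasurable).mp hind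
      rw [← hdist i, ← h1, Measure.map_map hadd ((hX i).prodMk hS)]
      congr 1
      funext ω
      simp [Finset.sum_insert hi]
    haveI : IsProbabilityMeasure (μ.map (fun ω => ∑ j ∈ s, X j ω)) :=
      Measure.isProbabilityMeasure_map hS.aemeasurable
    have step := goodCDF_conv (hα i) (hr i)
      (Finset.sum_nonneg fun j _ => (hα j).le) (Finset.sum_nonneg fun j _ => (hr j).le)
      (Finset.prod_pos fun j _ => Real.rpow_pos_of_pos (hr j) _) ih
    rw [hmap, Finset.sum_insert hi, Finset.prod_insert hi, Finset.sum_insert hi]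
    rwa [show r i ^ α i * ∏ j ∈ s, r j ^ α j = (∏ j ∈ s, r j ^ α j) * r i ^ α i from
      mul_comm _ _]

/-- Small-`x` asymptote of the CDF of a sum of `M` independent Gamma random variables:
`P(Σ X_j ≤ x) ~ (∏ r_j^(α_j)) x^A / (A Γ(A))` as `x → 0⁺`, where `A = Σ α_j`. -/
theorem sum_of_gammas_CDF_asymp {Ω : Type*} [MeasurableSpace Ω]
    (μ : Measure Ω) [IsProbabilityMeasure μ]
    (M : ℕ) (hM : 1 ≤ M) (α r : Fin M → ℝ)
    (hα : ∀ j, 0 < α j) (hr : ∀ j, 0 < r j)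
    (X : Fin M → Ω → ℝ) (hX : ∀ j, Measurable (X j))
    (hindep : iIndepFun X μ)
    (hdist : ∀ j, μ.map (X j) = gammaMeasure (α j) (r j)) :
    Tendsto
      (fun x : ℝ =>
        (μ {ω | ∑ j, X j ω ≤ x}).toReal /
          ((∏ j, r j ^ α j) * x ^ (∑ j, α j) / ((∑ j, α j) * Real.Gamma (∑ j, α j))))
      (𝓝[>] 0) (𝓝 1) := by
  have hgood := goodCDF_sum μ α r hα hr X hX hindep hdist Finset.univ
  haveI : Nonempty (Fin M) := ⟨⟨0, hM⟩⟩
  set A : ℝ := ∑ j, α j with hA_def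
  set P : ℝ := ∏ j, r j ^ α j with hP_def
  set R : ℝ := ∑ j, r j with hR_def
  have hA : 0 < A := Finset.sum_pos (fun j _ => hα j) Finset.univ_nonempty
  have hP : 0 < P := Finset.prod_pos fun j _ => Real.rpow_pos_of_pos (hr j) _
  have hGA : 0 < Real.Gamma A := Real.Gamma_pos_of_pos hA
  have hf : Measurable fun ω => ∑ j, X j ω :=
    Finset.measurable_sum Finset.univ (fun j _ => hX j)
  have hmeas : ∀ x : ℝ, μ {ω | ∑ j, X j ω ≤ x}
      = (μ.map (fun ω => ∑ j, X j ω)) (Set.Iic x) := by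
    intro x
    rw [Measure.map_apply hf measurableSet_Iic]
    rfl
  have hden : ∀ x : ℝ, P * x ^ A / (A * Real.Gamma A)
      = P / Real.Gamma (A + 1) * x ^ A := by
    intro x
    rw [Real.Gamma_add_one hA.ne']
    field_simp
  have hexp : Tendsto (fun x : ℝ => Real.exp (-(R * x))) (𝓝[>] 0) (𝓝 1) := by
    have hc : Continuous fun x : ℝ => Real.exp (-(R * x)) := by continuity
    have h1 := hc.tendsto 0
    simp only [mul_zero, neg_zero, Real.exp_zero] at h1
    exact h1.mono_left nhdsWithin_le_nhds
  apply tendsto_of_tendsto_of_tendsto_of_le_of_le' hexp tendsto_const_nhds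
  · filter_upwards [self_mem_nhdsWithin] with x hx
    have hx0 : 0 < x := hx
    have hd : 0 < P / Real.Gamma (A + 1) * x ^ A := by
      have : 0 < Real.Gamma (A + 1) := Real.Gamma_pos_of_pos (by linarith)
      have : 0 < x ^ A := Real.rpow_pos_of_pos hx0 _
      positivity
    rw [hmeas x, hden x, le_div_iff₀ hd]
    have := (hgood.2 x hx0.le).1
    calc Real.exp (-(R * x)) * (P / Real.Gamma (A + 1) * x ^ A)
        = P / Real.Gamma (A + 1) * x ^ A * Real.exp (-(R * x)) := by ring
      _ ≤ _ := this
  · filter_upwards [self_mem_nhdsWithin] with x hx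
    have hx0 : 0 < x := hx
    have hd : 0 < P / Real.Gamma (A + 1) * x ^ A := by
      have : 0 < Real.Gamma (A + 1) := Real.Gamma_pos_of_pos (by linarith)
      have : 0 < x ^ A := Real.rpow_pos_of_pos hx0 _
      positivity
    rw [hmeas x, hden x, div_le_one hd]
    exact (hgood.2 x hx0.le).2
end

section
/- (Rigorous core of Proposition 1: the matched Gamma CDF has the same asymptote as the CDF of the sum.) Let M ≥ 1 be a natural number and, for j = 1, …, M, let α_j > 0 and r_j > 0 be reals. Let X₁, …, X_M be independent real random variables, X_j Gamma-distributed with shape α_j and rate r_j. Define α_MGC = Σ_{j=1}^M α_j and β_MGC = ( ∏_{j=1}^M (1/r_j)^{α_j} )^{1/α_MGC}. Then the matched Gamma CDF x ↦ Υ(α_MGC, x/β_MGC)/Γ(α_MGC) is asymptotically equivalent to the exact CDF x ↦ P(Σ_{j=1}^M X_j ≤ x) as x → 0⁺; that is, the ratio of the two functions tends to 1 as x → 0⁺. -/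
open Real Filter Topology MeasureTheory ProbabilityTheory

open Set
open scoped ENNReal

lemma complex_eq_real_on_unit {a b s : ℝ} (h0 : 0 ≤ s) (h1 : s ≤ 1) :
    (s:ℂ) ^ ((a:ℂ) - 1) * (1 - (s:ℂ)) ^ ((b:ℂ) - 1)
      = ((s ^ (a-1) * (1-s) ^ (b-1) : ℝ) : ℂ) := by
  have e1 : ((a:ℂ) - 1) = ((a - 1 : ℝ) : ℂ) := by push_cast; ring
  have e2 : ((b:ℂ) - 1) = ((b - 1 : ℝ) : ℂ) := by push_cast; ring
  have e3 : (1 - (s:ℂ)) = ((1 - s : ℝ) : ℂ) := by push_cast; ring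
  rw [e1, e2, e3, ← Complex.ofReal_cpow h0, ← Complex.ofReal_cpow (by linarith), ← Complex.ofReal_mul]

lemma betaReal_intervalIntegrable {a b : ℝ} (ha : 0 < a) (hb : 0 < b) :
    IntervalIntegrable (fun s : ℝ => s ^ (a - 1) * (1 - s) ^ (b - 1)) volume 0 1 := by
  have h := (Complex.betaIntegral_convergent (u := (a:ℂ)) (v := (b:ℂ)) (by simpa) (by simpa)).norm
  rw [intervalIntegrable_iff] at h ⊢
  apply h.congr_fun ?_ measurableSet_uIoc
  intro s hs
  rw [uIoc_of_le (by norm_num : (0:ℝ) ≤ 1)] at hs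
  simp only [norm_norm]
  rw [complex_eq_real_on_unit hs.1.le hs.2, Complex.norm_real]
  exact Real.norm_of_nonneg (mul_nonneg (Real.rpow_nonneg hs.1.le _) (Real.rpow_nonneg (by linarith [hs.2]) _))

lemma betaReal_eval {a b : ℝ} (ha : 0 < a) (hb : 0 < b) :
    ∫ s in (0:ℝ)..1, s ^ (a - 1) * (1 - s) ^ (b - 1) = Gamma a * Gamma b / Gamma (a + b) := by
  have key := Complex.Gamma_mul_Gamma_eq_betaIntegral (s := (a:ℂ)) (t := (b:ℂ)) (by simpa) (by simpa)
  have hbeta : Complex.betaIntegral (a:ℂ) (b:ℂ)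
      = ((∫ s in (0:ℝ)..1, s ^ (a-1) * (1-s) ^ (b-1) : ℝ) : ℂ) := by
    rw [Complex.betaIntegral, ← intervalIntegral.integral_ofReal]
    apply intervalIntegral.integral_congr
    intro s hs
    rw [uIcc_of_le (by norm_num : (0:ℝ) ≤ 1)] at hs
    exact complex_eq_real_on_unit hs.1 hs.2
  rw [hbeta, ← Complex.ofReal_add, Complex.Gamma_ofReal, Complex.Gamma_ofReal,
    Complex.Gamma_ofReal, ← Complex.ofReal_mul, ← Complex.ofReal_mul] at key
  have := Complex.ofReal_inj.mp key
  have hG : Gamma (a + b) ≠ 0 := (Gamma_pos_of_pos (by linarith)).ne'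
  field_simp
  linarith [this]

lemma beta_pointwise {al q x t : ℝ} (hal : 0 < al) (hq : 0 < q) (hx : 0 < x)
    (h0 : 0 ≤ t) (h1 : t ≤ x) :
    x ^ (q + al - 1) * ((t * x⁻¹) ^ (al - 1) * (1 - t * x⁻¹) ^ ((q+1) - 1))
      = t ^ (al - 1) * (x - t) ^ q := by
  have hxi : (0:ℝ) ≤ x⁻¹ := by positivity
  have e1 : (1 : ℝ) - t * x⁻¹ = (x - t) * x⁻¹ := by field_simp
  rw [add_sub_cancel_right, e1, Real.mul_rpow h0 hxi, Real.mul_rpow (by linarith) hxi]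
  have hx0 : x ≠ 0 := hx.ne'
  rw [Real.inv_rpow hx.le, Real.inv_rpow hx.le]
  have key : x ^ (q + al - 1) * (x ^ (al - 1))⁻¹ * (x ^ q)⁻¹ = 1 := by
    rw [← Real.rpow_neg hx.le, ← Real.rpow_neg hx.le, ← Real.rpow_add hx, ← Real.rpow_add hx,
      show q + al - 1 + -(al - 1) + -q = 0 by ring, Real.rpow_zero]
  calc x ^ (q + al - 1) * (t ^ (al - 1) * (x ^ (al - 1))⁻¹ * ((x - t) ^ q * (x ^ q)⁻¹))
      = (x ^ (q + al - 1) * (x ^ (al - 1))⁻¹ * (x ^ q)⁻¹) * (t ^ (al - 1) * (x - t) ^ q) := by ring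
    _ = t ^ (al - 1) * (x - t) ^ q := by rw [key, one_mul]

lemma beta_scaled_integrable {al q x : ℝ} (hal : 0 < al) (hq : 0 < q) (hx : 0 < x) :
    IntervalIntegrable (fun t : ℝ => t ^ (al - 1) * (x - t) ^ q) volume 0 x := by
  have h0 := (betaReal_intervalIntegrable hal (by linarith : (0:ℝ) < q + 1)).comp_mul_right (c := x⁻¹)
  simp only [zero_div, one_div, inv_inv] at h0
  have h1 := h0.const_mul (x ^ (q + al - 1))
  rw [intervalIntegrable_iff] at h1 ⊢
  apply h1.congr_fun ?_ measurableSet_uIoc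
  intro t ht
  rw [uIoc_of_le hx.le] at ht
  exact beta_pointwise hal hq hx ht.1.le ht.2

lemma beta_scaled {al q x : ℝ} (hal : 0 < al) (hq : 0 < q) (hx : 0 < x) :
    ∫ t in (0:ℝ)..x, t ^ (al - 1) * (x - t) ^ q
      = x ^ (q + al) * (Gamma al * Gamma (q+1) / Gamma (al + (q+1))) := by
  have hcongr : ∫ t in (0:ℝ)..x, t ^ (al - 1) * (x - t) ^ q
      = ∫ t in (0:ℝ)..x, x ^ (q + al - 1) * ((t * x⁻¹) ^ (al - 1) * (1 - t * x⁻¹) ^ ((q+1) - 1)) := by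
    apply intervalIntegral.integral_congr
    intro t ht
    rw [uIcc_of_le hx.le] at ht
    exact (beta_pointwise hal hq hx ht.1 ht.2).symm
  rw [hcongr, intervalIntegral.integral_const_mul]
  have hsub := intervalIntegral.smul_integral_comp_mul_right
    (fun s : ℝ => s ^ (al - 1) * (1 - s) ^ ((q+1) - 1)) x⁻¹ (a := 0) (b := x)
  simp only [zero_mul, mul_inv_cancel₀ hx.ne', smul_eq_mul] at hsub
  have : ∫ t in (0:ℝ)..x, (t * x⁻¹) ^ (al - 1) * (1 - t * x⁻¹) ^ ((q+1) - 1)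
      = x * ∫ s in (0:ℝ)..1, s ^ (al - 1) * (1 - s) ^ ((q+1) - 1) := by
    rw [← hsub, ← mul_assoc, mul_inv_cancel₀ hx.ne', one_mul]
  rw [this, betaReal_eval hal (by linarith), ← mul_assoc]
  congr 1
  have hxx : x ^ (q + al) = x ^ (q + al - 1) * x := by
    nth_rewrite 3 [← Real.rpow_one x]
    rw [← Real.rpow_add hx]; ring_nf
  rw [hxx]

lemma lintegral_beta {al q x : ℝ} (hal : 0 < al) (hq : 0 < q) (hx : 0 < x) :
    ∫⁻ t in Ioo (0:ℝ) x, ENNReal.ofReal (t ^ (al - 1) * (x - t) ^ q)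
      = ENNReal.ofReal (x ^ (q + al) * (Gamma al * Gamma (q+1) / Gamma (al + (q+1)))) := by
  have hint : IntegrableOn (fun t : ℝ => t ^ (al-1) * (x-t) ^ q) (Ioo 0 x) volume :=
    (((intervalIntegrable_iff_integrableOn_Ioc_of_le hx.le).mp
      (beta_scaled_integrable hal hq hx)).mono_set Ioo_subset_Ioc_self)
  rw [← ofReal_integral_eq_lintegral_ofReal hint ?_]
  · congr 1
    rw [← MeasureTheory.integral_Ioc_eq_integral_Ioo, ← intervalIntegral.integral_of_le hx.le,
      beta_scaled hal hq hx]
  · rw [EventuallyLE, ae_restrict_iff' measurableSet_Ioo]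
    exact ae_of_all _ fun t ht => mul_nonneg (Real.rpow_nonneg ht.1.le _)
      (Real.rpow_nonneg (by linarith [ht.2]) _)

lemma lintegral_rpow_Ioo {al x : ℝ} (hal : 0 < al) (hx : 0 < x) :
    ∫⁻ t in Ioo (0:ℝ) x, ENNReal.ofReal (t ^ (al - 1)) = ENNReal.ofReal (x ^ al / al) := by
  have hint : IntegrableOn (fun t : ℝ => t ^ (al-1)) (Ioo 0 x) volume :=
    (((intervalIntegrable_iff_integrableOn_Ioc_of_le hx.le).mp
      (intervalIntegral.intervalIntegrable_rpow' (by linarith))).mono_set Ioo_subset_Ioc_self)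
  rw [← ofReal_integral_eq_lintegral_ofReal hint ?_]
  · congr 1
    rw [← MeasureTheory.integral_Ioc_eq_integral_Ioo, ← intervalIntegral.integral_of_le hx.le,
      integral_rpow (Or.inl (by linarith)), show al - 1 + 1 = al by ring,
      Real.zero_rpow hal.ne', sub_zero]
  · rw [EventuallyLE, ae_restrict_iff' measurableSet_Ioo]
    exact ae_of_all _ fun t ht => Real.rpow_nonneg ht.1.le _

lemma measurable_meas_Iic (ν : Measure ℝ) : Measurable (fun u : ℝ => ν (Iic u)) :=
  Monotone.measurable (fun _ _ hab => measure_mono (Iic_subset_Iic.2 hab))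

lemma ae_ne_zero : ∀ᵐ t : ℝ ∂volume, t ≠ 0 := by
  rw [ae_iff]
  simp only [ne_eq, not_not, setOf_eq_eq_singleton]
  exact Real.volume_singleton

lemma gammaMeasure_Iic_nonpos {al r x : ℝ} (hx : x ≤ 0) :
    gammaMeasure al r (Iic x) = 0 := by
  rw [gammaMeasure, withDensity_apply _ measurableSet_Iic]
  have hae : ∀ᵐ t : ℝ ∂volume, t ∈ Iic x → gammaPDF al r t = (fun _ => (0:ℝ≥0∞)) t := by
    filter_upwards [ae_ne_zero] with t ht hmem
    exact gammaPDF_of_neg (lt_of_le_of_ne (le_trans hmem hx) ht)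
  rw [setLIntegral_congr_fun_ae measurableSet_Iic hae, lintegral_zero]

lemma gammaMeasure_Iic_repr {al r x : ℝ} (hx : 0 < x) :
    gammaMeasure al r (Iic x)
      = ∫⁻ t in Ioo (0:ℝ) x, ENNReal.ofReal (r ^ al / Gamma al * t ^ (al - 1) * exp (-(r * t))) := by
  rw [gammaMeasure, withDensity_apply _ measurableSet_Iic,
    lintegral_Iic_eq_lintegral_Iio_add_Icc _ hx.le, lintegral_gammaPDF_of_nonpos le_rfl, zero_add,
    ← Measure.restrict_congr_set Ioo_ae_eq_Icc]
  apply setLIntegral_congr_fun measurableSet_Ioo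
  exact fun t ht => gammaPDF_of_nonneg ht.1.le

lemma integral_rpow_zero_to {A x : ℝ} (hA : 0 < A) (hx : 0 < x) :
    ∫ t in (0:ℝ)..x, t ^ (A - 1) = x ^ A / A := by
  rw [integral_rpow (Or.inl (by linarith)), show A - 1 + 1 = A by ring,
    Real.zero_rpow hA.ne', sub_zero]

lemma lowerIncGamma_bounds {A y : ℝ} (hA : 0 < A) (hy : 0 < y) :
    exp (-y) * (y ^ A / A) ≤ lowerIncGamma A y ∧ lowerIncGamma A y ≤ y ^ A / A := by
  have hmid : IntervalIntegrable (fun t : ℝ => t ^ (A-1) * exp (-t)) volume 0 y :=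
    (intervalIntegral.intervalIntegrable_rpow' (by linarith)).mul_continuousOn
      (Continuous.continuousOn (by continuity))
  have hup : IntervalIntegrable (fun t : ℝ => t ^ (A-1)) volume 0 y :=
    intervalIntegral.intervalIntegrable_rpow' (by linarith)
  have hlow : IntervalIntegrable (fun t : ℝ => t ^ (A-1) * exp (-y)) volume 0 y :=
    hup.mul_const _
  constructor
  · have h1 : ∫ t in (0:ℝ)..y, t ^ (A-1) * exp (-y) ≤ lowerIncGamma A y := by
      apply intervalIntegral.integral_mono_on hy.le hlow hmid
      intro t ht
      exact mul_le_mul_of_nonneg_left (exp_le_exp.2 (by linarith [ht.2])) (Real.rpow_nonneg ht.1 _)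
    calc exp (-y) * (y ^ A / A) = (y ^ A / A) * exp (-y) := by ring
    _ = ∫ t in (0:ℝ)..y, t ^ (A-1) * exp (-y) := by
        rw [intervalIntegral.integral_mul_const, integral_rpow_zero_to hA hy]
    _ ≤ _ := h1
  · have h2 : lowerIncGamma A y ≤ ∫ t in (0:ℝ)..y, t ^ (A-1) := by
      apply intervalIntegral.integral_mono_on hy.le hmid hup
      intro t ht
      nth_rewrite 2 [← mul_one (t ^ (A-1))]
      exact mul_le_mul_of_nonneg_left (by simpa using exp_le_exp.2 (by linarith [ht.1] : -t ≤ 0))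
        (Real.rpow_nonneg ht.1 _)
    calc lowerIncGamma A y ≤ _ := h2
    _ = y ^ A / A := integral_rpow_zero_to hA hy

lemma squeeze_aux {L : ℝ} {f g : ℝ → ℝ}
    (hg : Tendsto g (𝓝[>] (0:ℝ)) (𝓝 L))
    (hlow : ∀ x ∈ Ioi (0:ℝ), g x ≤ f x) (hup : ∀ x ∈ Ioi (0:ℝ), f x ≤ L) :
    Tendsto f (𝓝[>] (0:ℝ)) (𝓝 L) := by
  apply tendsto_of_tendsto_of_tendsto_of_le_of_le' hg tendsto_const_nhds
  · filter_upwards [eventually_mem_nhdsWithin] with x hx using hlow x hx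
  · filter_upwards [eventually_mem_nhdsWithin] with x hx using hup x hx

lemma exp_mul_tendsto (r c : ℝ) :
    Tendsto (fun x : ℝ => exp (-(r*x)) * c) (𝓝[>] 0) (𝓝 c) := by
  have hc : Continuous fun x : ℝ => exp (-(r*x)) * c := by continuity
  have := (hc.tendsto 0).mono_left (nhdsWithin_le_nhds (s := Ioi (0:ℝ)))
  simpa using this

lemma lowerIncGamma_asymp {A : ℝ} (hA : 0 < A) :
    Tendsto (fun y => lowerIncGamma A y / y ^ A) (𝓝[>] 0) (𝓝 (1/A)) := by
  apply squeeze_aux (g := fun y => exp (-(1*y)) * (1/A))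
  · exact exp_mul_tendsto 1 (1/A)
  · intro y hy
    have hb := (lowerIncGamma_bounds hA hy).1
    have hyA : (0:ℝ) < y ^ A := Real.rpow_pos_of_pos hy _
    rw [one_mul]
    have e : exp (-y) * (y ^ A / A) / y ^ A = exp (-y) * (1/A) := by field_simp
    rw [← e]
    exact (div_le_div_iff_of_pos_right hyA).mpr hb
  · intro y hy
    have hb := (lowerIncGamma_bounds hA hy).2
    have hyA : (0:ℝ) < y ^ A := Real.rpow_pos_of_pos hy _
    have e : y ^ A / A / y ^ A = 1/A := by field_simp
    rw [← e]
    exact (div_le_div_iff_of_pos_right hyA).mpr hb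

lemma gammaMeasure_bounds {al r x : ℝ} (hal : 0 < al) (hr : 0 < r) (hx : 0 < x) :
    ENNReal.ofReal (exp (-(r*x)) * (r ^ al / Gamma al) * (x ^ al / al))
        ≤ gammaMeasure al r (Iic x)
      ∧ gammaMeasure al r (Iic x) ≤ ENNReal.ofReal ((r ^ al / Gamma al) * (x ^ al / al)) := by
  set d := r ^ al / Gamma al with hd_def
  have hd : 0 < d := div_pos (rpow_pos_of_pos hr _) (Gamma_pos_of_pos hal)
  have hmeas : Measurable fun t : ℝ => ENNReal.ofReal (t ^ (al - 1)) :=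
    ((measurable_id'.pow_const _).ennreal_ofReal)
  rw [gammaMeasure_Iic_repr hx]
  constructor
  · have hptwise : ∀ᵐ t ∂(volume.restrict (Ioo (0:ℝ) x)),
        ENNReal.ofReal (exp (-(r*x)) * d * t ^ (al-1))
          ≤ ENNReal.ofReal (d * t ^ (al-1) * exp (-(r*t))) := by
      rw [ae_restrict_iff' measurableSet_Ioo]
      exact ae_of_all _ fun t ht => ENNReal.ofReal_le_ofReal (by
          have h1 : exp (-(r*x)) ≤ exp (-(r*t)) := exp_le_exp.2 (by nlinarith [ht.2, hr.le])
          have h2 : (0:ℝ) ≤ d * t ^ (al-1) := mul_nonneg hd.le (Real.rpow_nonneg ht.1.le _)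
          calc exp (-(r*x)) * d * t ^ (al-1) = (d * t ^ (al-1)) * exp (-(r*x)) := by ring
          _ ≤ (d * t ^ (al-1)) * exp (-(r*t)) := mul_le_mul_of_nonneg_left h1 h2
          _ = d * t ^ (al-1) * exp (-(r*t)) := by ring)
    calc ENNReal.ofReal (exp (-(r*x)) * d * (x ^ al / al))
        = ENNReal.ofReal (exp (-(r*x)) * d) * ENNReal.ofReal (x ^ al / al) :=
          ENNReal.ofReal_mul (by positivity)
      _ = ENNReal.ofReal (exp (-(r*x)) * d) * ∫⁻ t in Ioo (0:ℝ) x, ENNReal.ofReal (t ^ (al-1)) := by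
          rw [lintegral_rpow_Ioo hal hx]
      _ = ∫⁻ t in Ioo (0:ℝ) x, ENNReal.ofReal (exp (-(r*x)) * d) * ENNReal.ofReal (t ^ (al-1)) := by
          rw [lintegral_const_mul _ hmeas]
      _ = ∫⁻ t in Ioo (0:ℝ) x, ENNReal.ofReal (exp (-(r*x)) * d * t ^ (al-1)) := by
          apply lintegral_congr fun t => (ENNReal.ofReal_mul (by positivity)).symm
      _ ≤ _ := lintegral_mono_ae hptwise
  · have hptwise : ∀ᵐ t ∂(volume.restrict (Ioo (0:ℝ) x)),
        ENNReal.ofReal (d * t ^ (al-1) * exp (-(r*t))) ≤ ENNReal.ofReal (d * t ^ (al-1)) := by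
      rw [ae_restrict_iff' measurableSet_Ioo]
      exact ae_of_all _ fun t ht => ENNReal.ofReal_le_ofReal
          (mul_le_of_le_one_right (mul_nonneg hd.le (Real.rpow_nonneg ht.1.le _))
            (exp_le_one_iff.2 (by nlinarith [ht.1, hr.le])))
    calc ∫⁻ t in Ioo (0:ℝ) x, ENNReal.ofReal (d * t ^ (al-1) * exp (-(r*t)))
        ≤ ∫⁻ t in Ioo (0:ℝ) x, ENNReal.ofReal (d * t ^ (al-1)) := lintegral_mono_ae hptwise
      _ = ∫⁻ t in Ioo (0:ℝ) x, ENNReal.ofReal d * ENNReal.ofReal (t ^ (al-1)) := by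
          apply lintegral_congr fun t => ENNReal.ofReal_mul hd.le
      _ = ENNReal.ofReal d * ENNReal.ofReal (x ^ al / al) := by
          rw [lintegral_const_mul _ hmeas, lintegral_rpow_Ioo hal hx]
      _ = ENNReal.ofReal (d * (x ^ al / al)) := (ENNReal.ofReal_mul hd.le).symm

lemma gammaMeasure_asymp {al r : ℝ} (hal : 0 < al) (hr : 0 < r) :
    Tendsto (fun x => ((gammaMeasure al r) (Iic x)).toReal / x ^ al) (𝓝[>] 0)
      (𝓝 (r ^ al / Gamma (al + 1))) := by
  have hP : IsProbabilityMeasure (gammaMeasure al r) := isProbabilityMeasure_gammaMeasure hal hr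
  set d := r ^ al / Gamma al with hd_def
  have hd : 0 < d := div_pos (rpow_pos_of_pos hr _) (Gamma_pos_of_pos hal)
  have hGpos : 0 < Gamma al := Gamma_pos_of_pos hal
  have hconst : r ^ al / Gamma (al+1) = d / al := by
    rw [Gamma_add_one hal.ne', hd_def, div_div, mul_comm al (Gamma al)]
  rw [hconst]
  apply squeeze_aux (g := fun x => exp (-(r*x)) * (d/al))
  · exact exp_mul_tendsto r (d/al)
  · intro x hx
    have hb := (gammaMeasure_bounds hal hr hx).1
    have hne : gammaMeasure al r (Iic x) ≠ ⊤ := measure_ne_top _ _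
    have hle : exp (-(r*x)) * d * (x ^ al / al)
        ≤ ((gammaMeasure al r) (Iic x)).toReal :=
      (ENNReal.ofReal_le_iff_le_toReal hne).mp hb
    have hxA : (0:ℝ) < x ^ al := Real.rpow_pos_of_pos hx _
    have e : exp (-(r*x)) * d * (x ^ al / al) / x ^ al = exp (-(r*x)) * (d/al) := by
      field_simp
    rw [← e]
    exact (div_le_div_iff_of_pos_right hxA).mpr hle
  · intro x hx
    have hb := (gammaMeasure_bounds hal hr hx).2
    have hle : ((gammaMeasure al r) (Iic x)).toReal ≤ d * (x ^ al / al) :=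
      ENNReal.toReal_le_of_le_ofReal (mul_nonneg hd.le (div_nonneg (Real.rpow_nonneg (le_of_lt hx) _) hal.le)) hb
    have hxA : (0:ℝ) < x ^ al := Real.rpow_pos_of_pos hx _
    have e : d * (x ^ al / al) / x ^ al = d / al := by field_simp
    rw [← e]
    exact (div_le_div_iff_of_pos_right hxA).mpr hle

lemma meas_Iic_nonpos_zero {ν : Measure ℝ} (hν0 : ν (Iic 0) = 0) {u : ℝ} (hu : u ≤ 0) :
    ν (Iic u) = 0 :=
  le_antisymm (hν0 ▸ measure_mono (Iic_subset_Iic.2 hu)) zero_le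

instance gammaMeasure_sfinite (al r : ℝ) : SFinite (gammaMeasure al r) :=
  inferInstanceAs (SFinite (volume.withDensity _))

lemma conv_Iic_repr (ν : Measure ℝ) [IsFiniteMeasure ν] (al r : ℝ) (x : ℝ) :
    (Measure.conv ν (gammaMeasure al r)) (Iic x)
      = ∫⁻ t, gammaPDF al r t * ν (Iic (x - t)) := by
  rw [Measure.conv_comm, Measure.conv,
    Measure.map_apply measurable_add measurableSet_Iic,
    Measure.prod_apply (measurable_add measurableSet_Iic)]
  have hset : ∀ t : ℝ, (Prod.mk t ⁻¹' ((fun p : ℝ × ℝ => p.1 + p.2) ⁻¹' Iic x)) = Iic (x - t) := by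
    intro t; ext s; simp [mem_Iic]; constructor <;> intro h <;> linarith
  simp_rw [hset]
  have hg : Measurable fun t : ℝ => ν (Iic (x - t)) :=
    (measurable_meas_Iic ν).comp (measurable_const.sub measurable_id)
  have hpdf : Measurable (gammaPDF al r) := (measurable_gammaPDFReal al r).ennreal_ofReal
  rw [gammaMeasure, lintegral_withDensity_eq_lintegral_mul volume hpdf hg]
  rfl

lemma conv_Iic_nonpos (ν : Measure ℝ) [IsFiniteMeasure ν] (hν0 : ν (Iic 0) = 0)
    {al r x : ℝ} (hx : x ≤ 0) : (Measure.conv ν (gammaMeasure al r)) (Iic x) = 0 := by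
  rw [conv_Iic_repr]
  have : (fun t : ℝ => gammaPDF al r t * ν (Iic (x - t))) =ᵐ[volume] (fun _ => 0) := by
    filter_upwards [ae_ne_zero] with t ht
    rcases lt_or_gt_of_ne ht with h | h
    · rw [gammaPDF_of_neg h, zero_mul]
    · rw [meas_Iic_nonpos_zero hν0 (by linarith), mul_zero]
  rw [lintegral_congr_ae this, lintegral_zero]

lemma conv_restrict (ν : Measure ℝ) [IsFiniteMeasure ν] (hν0 : ν (Iic 0) = 0)
    {al r x : ℝ} (hx : 0 < x) :
    (Measure.conv ν (gammaMeasure al r)) (Iic x)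
      = ∫⁻ t in Ioo (0:ℝ) x, ENNReal.ofReal (r ^ al / Gamma al * t ^ (al - 1) * exp (-(r * t)))
          * ν (Iic (x - t)) := by
  rw [conv_Iic_repr, ← lintegral_indicator measurableSet_Ioo]
  apply lintegral_congr_ae
  filter_upwards [ae_ne_zero] with t ht
  by_cases hmem : t ∈ Ioo (0:ℝ) x
  · rw [indicator_of_mem hmem, gammaPDF_of_nonneg hmem.1.le]
  · rw [indicator_of_notMem hmem]
    simp only [mem_Ioo, not_and_or, not_lt] at hmem
    rcases hmem with h | h
    · rw [gammaPDF_of_neg (lt_of_le_of_ne h ht), zero_mul]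
    · rw [meas_Iic_nonpos_zero hν0 (by linarith), mul_zero]

lemma conv_upper (ν : Measure ℝ) [IsFiniteMeasure ν] (hν0 : ν (Iic 0) = 0)
    {q al r C x : ℝ} (hq : 0 < q) (hal : 0 < al) (hr : 0 < r) (hx : 0 < x) (hC : 0 ≤ C)
    (hband : ∀ u, 0 < u → u < x → (ν (Iic u)).toReal ≤ C * u ^ q) :
    (Measure.conv ν (gammaMeasure al r)) (Iic x)
      ≤ ENNReal.ofReal ((r ^ al / Gamma al) * C *
          (x ^ (q + al) * (Gamma al * Gamma (q+1) / Gamma (al + (q+1))))) := by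
  set d := r ^ al / Gamma al with hd_def
  have hd : 0 < d := div_pos (rpow_pos_of_pos hr _) (Gamma_pos_of_pos hal)
  have hmeas : Measurable fun t : ℝ => ENNReal.ofReal (t ^ (al-1) * (x - t) ^ q) :=
    ((measurable_id'.pow_const _).mul ((measurable_const.sub measurable_id').pow_const _)).ennreal_ofReal
  rw [conv_restrict ν hν0 hx]
  calc ∫⁻ t in Ioo (0:ℝ) x, ENNReal.ofReal (d * t ^ (al-1) * exp (-(r * t))) * ν (Iic (x - t))
      ≤ ∫⁻ t in Ioo (0:ℝ) x, ENNReal.ofReal (d * C) * ENNReal.ofReal (t ^ (al-1) * (x - t) ^ q) := by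
        apply lintegral_mono_ae
        rw [ae_restrict_iff' measurableSet_Ioo]
        apply ae_of_all _ fun t ht => ?_
        have htx : 0 < x - t := by linarith [ht.2]
        have h1 : ENNReal.ofReal (d * t ^ (al-1) * exp (-(r * t))) ≤ ENNReal.ofReal (d * t ^ (al-1)) :=
          ENNReal.ofReal_le_ofReal (mul_le_of_le_one_right
            (mul_nonneg hd.le (Real.rpow_nonneg ht.1.le _))
            (exp_le_one_iff.2 (by nlinarith [ht.1, hr.le])))
        have h2 : ν (Iic (x - t)) ≤ ENNReal.ofReal (C * (x - t) ^ q) := by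
          rw [← ENNReal.ofReal_toReal (measure_ne_top ν _)]
          exact ENNReal.ofReal_le_ofReal (hband _ htx (by linarith [ht.1]))
        calc ENNReal.ofReal (d * t ^ (al-1) * exp (-(r * t))) * ν (Iic (x - t))
            ≤ ENNReal.ofReal (d * t ^ (al-1)) * ENNReal.ofReal (C * (x - t) ^ q) :=
              mul_le_mul' h1 h2
          _ = ENNReal.ofReal (d * C) * ENNReal.ofReal (t ^ (al-1) * (x - t) ^ q) := by
              rw [← ENNReal.ofReal_mul (mul_nonneg hd.le (Real.rpow_nonneg ht.1.le _)),
                ← ENNReal.ofReal_mul (mul_nonneg hd.le hC)]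
              congr 1
              ring
    _ = ENNReal.ofReal (d * C) * ENNReal.ofReal (x ^ (q + al) * (Gamma al * Gamma (q+1) / Gamma (al + (q+1)))) := by
        rw [lintegral_const_mul _ hmeas, lintegral_beta hal hq hx]
    _ = ENNReal.ofReal (d * C * (x ^ (q + al) * (Gamma al * Gamma (q+1) / Gamma (al + (q+1))))) := by
        rw [← ENNReal.ofReal_mul (by positivity)]

lemma conv_lower (ν : Measure ℝ) [IsFiniteMeasure ν] (hν0 : ν (Iic 0) = 0)
    {q al r c x : ℝ} (hq : 0 < q) (hal : 0 < al) (hr : 0 < r) (hx : 0 < x) (hc : 0 ≤ c)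
    (hband : ∀ u, 0 < u → u < x → c * u ^ q ≤ (ν (Iic u)).toReal) :
    ENNReal.ofReal (exp (-(r*x)) * (r ^ al / Gamma al) * c *
          (x ^ (q + al) * (Gamma al * Gamma (q+1) / Gamma (al + (q+1)))))
      ≤ (Measure.conv ν (gammaMeasure al r)) (Iic x) := by
  set d := r ^ al / Gamma al with hd_def
  have hd : 0 < d := div_pos (rpow_pos_of_pos hr _) (Gamma_pos_of_pos hal)
  have hmeas : Measurable fun t : ℝ => ENNReal.ofReal (t ^ (al-1) * (x - t) ^ q) :=
    ((measurable_id'.pow_const _).mul ((measurable_const.sub measurable_id').pow_const _)).ennreal_ofReal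
  rw [conv_restrict ν hν0 hx]
  calc ENNReal.ofReal (exp (-(r*x)) * d * c * (x ^ (q + al) * (Gamma al * Gamma (q+1) / Gamma (al + (q+1)))))
      = ENNReal.ofReal (exp (-(r*x)) * d * c) * ENNReal.ofReal (x ^ (q + al) * (Gamma al * Gamma (q+1) / Gamma (al + (q+1)))) := by
        rw [← ENNReal.ofReal_mul (by positivity)]
    _ = ∫⁻ t in Ioo (0:ℝ) x, ENNReal.ofReal (exp (-(r*x)) * d * c) * ENNReal.ofReal (t ^ (al-1) * (x - t) ^ q) := by
        rw [lintegral_const_mul _ hmeas, lintegral_beta hal hq hx]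
    _ ≤ ∫⁻ t in Ioo (0:ℝ) x, ENNReal.ofReal (d * t ^ (al-1) * exp (-(r * t))) * ν (Iic (x - t)) := by
        apply lintegral_mono_ae
        rw [ae_restrict_iff' measurableSet_Ioo]
        apply ae_of_all _ fun t ht => ?_
        have htx : 0 < x - t := by linarith [ht.2]
        have h1 : ENNReal.ofReal (exp (-(r*x)) * (d * t ^ (al-1)))
            ≤ ENNReal.ofReal (d * t ^ (al-1) * exp (-(r * t))) := by
          apply ENNReal.ofReal_le_ofReal
          have he : exp (-(r*x)) ≤ exp (-(r*t)) := exp_le_exp.2 (by nlinarith [ht.2, hr.le])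
          have h2 : (0:ℝ) ≤ d * t ^ (al-1) := mul_nonneg hd.le (Real.rpow_nonneg ht.1.le _)
          calc exp (-(r*x)) * (d * t ^ (al-1)) = (d * t ^ (al-1)) * exp (-(r*x)) := by ring
            _ ≤ (d * t ^ (al-1)) * exp (-(r*t)) := mul_le_mul_of_nonneg_left he h2
            _ = d * t ^ (al-1) * exp (-(r*t)) := by ring
        have h2 : ENNReal.ofReal (c * (x - t) ^ q) ≤ ν (Iic (x - t)) := by
          rw [← ENNReal.ofReal_toReal (measure_ne_top ν _)]
          exact ENNReal.ofReal_le_ofReal (hband _ htx (by linarith [ht.1]))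
        calc ENNReal.ofReal (exp (-(r*x)) * d * c) * ENNReal.ofReal (t ^ (al-1) * (x - t) ^ q)
            = ENNReal.ofReal (exp (-(r*x)) * (d * t ^ (al-1))) * ENNReal.ofReal (c * (x - t) ^ q) := by
              rw [← ENNReal.ofReal_mul (by positivity : (0:ℝ) ≤ exp (-(r*x)) * d * c),
                ← ENNReal.ofReal_mul (mul_nonneg (exp_nonneg _) (mul_nonneg hd.le (Real.rpow_nonneg ht.1.le _)))]
              congr 1
              ring
          _ ≤ _ := mul_le_mul' h1 h2

lemma conv_asymp (ν : Measure ℝ) [IsFiniteMeasure ν] {q c al r : ℝ}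
    (hq : 0 < q) (hc : 0 < c) (hal : 0 < al) (hr : 0 < r)
    (hν0 : ν (Iic 0) = 0)
    (hT : Tendsto (fun u => (ν (Iic u)).toReal / u ^ q) (𝓝[>] 0) (𝓝 c)) :
    Tendsto (fun x => ((Measure.conv ν (gammaMeasure al r)) (Iic x)).toReal / x ^ (q + al))
      (𝓝[>] 0) (𝓝 (c * (r ^ al * Gamma (q + 1) / Gamma (al + (q + 1))))) := by
  have hP : IsProbabilityMeasure (gammaMeasure al r) := isProbabilityMeasure_gammaMeasure hal hr
  have hGal : 0 < Gamma al := Gamma_pos_of_pos hal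
  set d := r ^ al / Gamma al with hd_def
  have hd : 0 < d := div_pos (rpow_pos_of_pos hr _) hGal
  set B := Gamma al * Gamma (q+1) / Gamma (al + (q+1)) with hB_def
  have hB : 0 < B := div_pos (mul_pos hGal (Gamma_pos_of_pos (by linarith)))
    (Gamma_pos_of_pos (by linarith))
  set K := d * B with hK_def
  have hK : 0 < K := mul_pos hd hB
  have hKval : c * (r ^ al * Gamma (q+1) / Gamma (al + (q+1))) = c * K := by
    rw [hK_def, hd_def, hB_def]
    field_simp
  rw [hKval]
  have band : ∀ ε, 0 < ε → ∀ᶠ x in 𝓝[>] (0:ℝ), ∀ u, 0 < u → u < x →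
      (c - ε) * u ^ q ≤ (ν (Iic u)).toReal ∧ (ν (Iic u)).toReal ≤ (c + ε) * u ^ q := by
    intro ε hε
    obtain ⟨δ, hδ, hδ'⟩ := Metric.tendsto_nhdsWithin_nhds.mp hT ε hε
    filter_upwards [Ioo_mem_nhdsGT_of_mem (show (0:ℝ) ∈ Ico (0:ℝ) δ from ⟨le_rfl, hδ⟩)]
      with x hx u hu hux
    have hdist : dist u 0 < δ := by
      rw [Real.dist_eq, sub_zero, abs_of_pos hu]
      exact lt_trans hux hx.2
    have := hδ' (mem_Ioi.2 hu) hdist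
    rw [Real.dist_eq, abs_lt] at this
    have huq : (0:ℝ) < u ^ q := rpow_pos_of_pos hu _
    constructor
    · have h1 : c - ε ≤ (ν (Iic u)).toReal / u ^ q := by linarith [this.1]
      calc (c - ε) * u ^ q ≤ ((ν (Iic u)).toReal / u ^ q) * u ^ q :=
            mul_le_mul_of_nonneg_right h1 huq.le
        _ = (ν (Iic u)).toReal := by field_simp
    · have h1 : (ν (Iic u)).toReal / u ^ q ≤ c + ε := by linarith [this.2]
      calc (ν (Iic u)).toReal = ((ν (Iic u)).toReal / u ^ q) * u ^ q := by field_simp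
        _ ≤ (c + ε) * u ^ q := mul_le_mul_of_nonneg_right h1 huq.le
  rw [tendsto_order]
  constructor
  · intro b hb
    set ε := min (c/2) ((c*K - b)/(2*K)) with hε_def
    have hε : 0 < ε := lt_min (by linarith) (div_pos (by linarith) (by linarith))
    have hcε : 0 ≤ c - ε := by
      have := min_le_left (c/2) ((c*K - b)/(2*K))
      have : ε ≤ c/2 := this
      linarith
    have htarget : b < (c - ε) * K := by
      have h2 : ε ≤ (c*K - b)/(2*K) := min_le_right _ _
      have h2' : ε * (2*K) ≤ c*K - b := (le_div_iff₀ (by linarith)).mp h2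
      nlinarith [h2', hK, hb]
    have hev1 : ∀ᶠ x in 𝓝[>] (0:ℝ), b < exp (-(r*x)) * ((c-ε)*K) :=
      (exp_mul_tendsto r ((c-ε)*K)).eventually (eventually_gt_nhds htarget)
    filter_upwards [band ε hε, hev1, eventually_mem_nhdsWithin] with x hbandx hblt hx
    have hx0 : (0:ℝ) < x := hx
    have hlow := conv_lower ν hν0 hq hal hr hx0 hcε (fun u hu hux => (hbandx u hu hux).1)
    have hne : (Measure.conv ν (gammaMeasure al r)) (Iic x) ≠ ⊤ := measure_ne_top _ _
    have h3 : exp (-(r*x)) * d * (c-ε) * (x^(q+al) * B)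
        ≤ ((Measure.conv ν (gammaMeasure al r)) (Iic x)).toReal :=
      (ENNReal.ofReal_le_iff_le_toReal hne).mp hlow
    have hxq : (0:ℝ) < x^(q+al) := rpow_pos_of_pos hx0 _
    calc b < exp (-(r*x)) * ((c-ε)*K) := hblt
      _ = exp (-(r*x)) * d * (c-ε) * (x^(q+al) * B) / x^(q+al) := by
          rw [hK_def]; field_simp
      _ ≤ _ := (div_le_div_iff_of_pos_right hxq).mpr h3
  · intro b hb
    set ε := (b - c*K)/(2*K) with hε_def
    have hε : 0 < ε := by
      apply div_pos (by linarith) (by linarith)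
    have htarget : (c + ε) * K < b := by
      have h2' : ε * (2*K) = b - c*K := by
        rw [hε_def]; field_simp
      nlinarith [h2', hK, hb]
    filter_upwards [band ε hε, eventually_mem_nhdsWithin] with x hbandx hx
    have hx0 : (0:ℝ) < x := hx
    have hxq : (0:ℝ) < x^(q+al) := rpow_pos_of_pos hx0 _
    have hup := conv_upper ν hν0 hq hal hr hx0 (by linarith : (0:ℝ) ≤ c + ε)
      (fun u hu hux => (hbandx u hu hux).2)
    have h3 : ((Measure.conv ν (gammaMeasure al r)) (Iic x)).toReal
        ≤ d * (c+ε) * (x^(q+al) * B) :=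
      ENNReal.toReal_le_of_le_ofReal
        (mul_nonneg (mul_nonneg hd.le (by linarith)) (mul_nonneg hxq.le hB.le)) hup
    calc ((Measure.conv ν (gammaMeasure al r)) (Iic x)).toReal / x^(q+al)
        ≤ d * (c+ε) * (x^(q+al) * B) / x^(q+al) := (div_le_div_iff_of_pos_right hxq).mpr h3
      _ = (c+ε) * K := by rw [hK_def]; field_simp
      _ < b := htarget

/-- Rigorous core of Proposition 1: with `α_MGC = Σ α_j` and
`β_MGC = (∏ (1/r_j)^(α_j))^(1/α_MGC)`, the matched Gamma CDF
`x ↦ Υ(α_MGC, x/β_MGC)/Γ(α_MGC)` is asymptotically equivalent as `x → 0⁺`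
to the exact CDF of the sum of `M` independent Gamma variables. -/
theorem matched_gamma_CDF_asymp_equiv_sum_CDF {Ω : Type*} [MeasurableSpace Ω]
    (μ : Measure Ω) [IsProbabilityMeasure μ]
    (M : ℕ) (hM : 1 ≤ M) (α r : Fin M → ℝ)
    (hα : ∀ j, 0 < α j) (hr : ∀ j, 0 < r j)
    (X : Fin M → Ω → ℝ) (hX : ∀ j, Measurable (X j))
    (hindep : iIndepFun X μ)
    (hdist : ∀ j, μ.map (X j) = gammaMeasure (α j) (r j))
    (αMGC βMGC : ℝ)
    (hαMGC : αMGC = ∑ j, α j)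
    (hβMGC : βMGC = (∏ j, (1 / r j) ^ α j) ^ (1 / αMGC)) :
    Tendsto
      (fun x : ℝ =>
        (lowerIncGamma αMGC (x / βMGC) / Real.Gamma αMGC) /
          (μ {ω | ∑ j, X j ω ≤ x}).toReal)
      (𝓝[>] 0) (𝓝 1) := by
  -- the induction over nonempty finsets
  have main_ind : ∀ (s : Finset (Fin M)), s.Nonempty →
      (μ.map (fun ω => ∑ j ∈ s, X j ω)) (Iic 0) = 0 ∧
      Tendsto (fun x => ((μ.map (fun ω => ∑ j ∈ s, X j ω)) (Iic x)).toReal / x ^ (∑ j ∈ s, α j))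
        (𝓝[>] 0) (𝓝 ((∏ j ∈ s, r j ^ α j) / Gamma ((∑ j ∈ s, α j) + 1))) := by
    intro s hs
    induction hs using Finset.Nonempty.cons_induction with
    | singleton a =>
      have hmap : μ.map (fun ω => ∑ j ∈ ({a} : Finset (Fin M)), X j ω)
          = gammaMeasure (α a) (r a) := by
        rw [← hdist a]
        congr 1
        funext ω
        exact Finset.sum_singleton _ _
      rw [hmap]
      simp only [Finset.sum_singleton, Finset.prod_singleton]
      exact ⟨gammaMeasure_Iic_nonpos le_rfl, gammaMeasure_asymp (hα a) (hr a)⟩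
    | cons a s hnotmem hs IH =>
      have hSmeas : Measurable (fun ω => ∑ j ∈ s, X j ω) :=
        Finset.measurable_sum s (fun j _ => hX j)
      haveI : IsProbabilityMeasure (μ.map (fun ω => ∑ j ∈ s, X j ω)) :=
        Measure.isProbabilityMeasure_map hSmeas.aemeasurable
      have hindep2 : IndepFun (fun ω => ∑ j ∈ s, X j ω) (X a) μ := by
        have h := hindep.indepFun_finset_sum_of_notMem hX hnotmem
        have he : (fun ω => ∑ j ∈ s, X j ω) = ∑ j ∈ s, X j := by
          funext ω
          rw [Finset.sum_apply]
        rw [he]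
        exact h
      have hprod : μ.map (fun ω => ((∑ j ∈ s, X j ω), X a ω))
          = (μ.map (fun ω => ∑ j ∈ s, X j ω)).prod (μ.map (X a)) :=
        (indepFun_iff_map_prod_eq_prod_map_map hSmeas.aemeasurable (hX a).aemeasurable).mp hindep2
      have hmap : μ.map (fun ω => ∑ j ∈ Finset.cons a s hnotmem, X j ω)
          = Measure.conv (μ.map (fun ω => ∑ j ∈ s, X j ω)) (gammaMeasure (α a) (r a)) := by
        have h1 : (fun ω => ∑ j ∈ Finset.cons a s hnotmem, X j ω)
            = (fun p : ℝ × ℝ => p.1 + p.2) ∘ (fun ω => ((∑ j ∈ s, X j ω), X a ω)) := by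
          funext ω
          simp only [Finset.sum_cons, Function.comp_apply]
          ring
        rw [h1, ← Measure.map_map measurable_add (hSmeas.prodMk (hX a)), hprod, hdist a]
        rfl
      have hq : 0 < ∑ j ∈ s, α j := Finset.sum_pos (fun j _ => hα j) hs
      have hc : 0 < (∏ j ∈ s, r j ^ α j) / Gamma ((∑ j ∈ s, α j) + 1) :=
        div_pos (Finset.prod_pos (fun j _ => rpow_pos_of_pos (hr j) _))
          (Gamma_pos_of_pos (by linarith))
      have hconv := conv_asymp (μ.map (fun ω => ∑ j ∈ s, X j ω)) hq hc (hα a) (hr a) IH.1 IH.2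
      constructor
      · rw [hmap]
        exact conv_Iic_nonpos _ IH.1 le_rfl
      · simp only [hmap]
        simp only [Finset.sum_cons, Finset.prod_cons]
        rw [add_comm (α a) (∑ j ∈ s, α j)]
        have hval : ((∏ j ∈ s, r j ^ α j) / Gamma ((∑ j ∈ s, α j) + 1))
            * (r a ^ α a * Gamma ((∑ j ∈ s, α j) + 1) / Gamma (α a + ((∑ j ∈ s, α j) + 1)))
            = (r a ^ α a * ∏ j ∈ s, r j ^ α j) / Gamma ((∑ j ∈ s, α j) + α a + 1) := by
          rw [show α a + ((∑ j ∈ s, α j) + 1) = (∑ j ∈ s, α j) + α a + 1 by ring]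
          have hΓ1 : Gamma ((∑ j ∈ s, α j) + 1) ≠ 0 := (Gamma_pos_of_pos (by linarith)).ne'
          have hΓ2 : Gamma ((∑ j ∈ s, α j) + α a + 1) ≠ 0 :=
            (Gamma_pos_of_pos (by linarith [hα a])).ne'
          field_simp
        rw [← hval]
        exact hconv
  -- specialize to univ
  haveI : Nonempty (Fin M) := ⟨⟨0, hM⟩⟩
  obtain ⟨hD0, hD⟩ := main_ind Finset.univ Finset.univ_nonempty
  rw [← hαMGC] at hD
  set A := αMGC with hA_def
  have hA : 0 < A := by
    rw [hαMGC]
    exact Finset.sum_pos (fun j _ => hα j) Finset.univ_nonempty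
  set R := ∏ j, r j ^ α j with hR_def
  have hRpos : 0 < R := Finset.prod_pos (fun j _ => rpow_pos_of_pos (hr j) _)
  have hC : 0 < R / Gamma (A + 1) := div_pos hRpos (Gamma_pos_of_pos (by linarith))
  -- rewrite denominator
  have hSmeas : Measurable (fun ω => ∑ j, X j ω) := Finset.measurable_sum _ (fun j _ => hX j)
  have hDset : ∀ x : ℝ, (μ.map (fun ω => ∑ j, X j ω)) (Iic x) = μ {ω | ∑ j, X j ω ≤ x} := by
    intro x
    rw [Measure.map_apply hSmeas measurableSet_Iic]
    rfl
  have hD' : Tendsto (fun x => (μ {ω | ∑ j, X j ω ≤ x}).toReal / x ^ A)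
      (𝓝[>] 0) (𝓝 (R / Gamma (A + 1))) := by
    simp only [← hDset]
    exact hD
  -- numerator
  set P := ∏ j, (1 / r j) ^ α j with hP_def
  have hPpos : 0 < P := Finset.prod_pos (fun j _ => rpow_pos_of_pos (one_div_pos.mpr (hr j)) _)
  have hβpos : 0 < βMGC := by
    rw [hβMGC]
    exact rpow_pos_of_pos hPpos _
  have hβA : βMGC ^ A = P := by
    rw [hβMGC, ← Real.rpow_mul hPpos.le, one_div, inv_mul_cancel₀ hA.ne', Real.rpow_one]
  have hPR : P = R⁻¹ := by
    rw [hP_def, hR_def, ← Finset.prod_inv_distrib]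
    apply Finset.prod_congr rfl
    intro j _
    rw [one_div]
    exact Real.inv_rpow (hr j).le _
  have hcomp : Tendsto (fun x : ℝ => x / βMGC) (𝓝[>] 0) (𝓝[>] 0) := by
    apply tendsto_nhdsWithin_of_tendsto_nhds_of_eventually_within
    · have : Tendsto (fun x : ℝ => x / βMGC) (𝓝 0) (𝓝 (0 / βMGC)) :=
        (continuous_id.div_const βMGC).tendsto 0
      simpa using this.mono_left nhdsWithin_le_nhds
    · filter_upwards [eventually_mem_nhdsWithin] with x hx
      exact div_pos hx hβpos
  have htot := (lowerIncGamma_asymp hA).comp hcomp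
  have hN : Tendsto (fun x => (lowerIncGamma A (x / βMGC) / Gamma A) / x ^ A)
      (𝓝[>] 0) (𝓝 (R / Gamma (A + 1))) := by
    have h1 := htot.mul_const (1 / (βMGC ^ A * Gamma A))
    have hval : (1/A) * (1 / (βMGC ^ A * Gamma A)) = R / Gamma (A + 1) := by
      rw [hβA, hPR, Gamma_add_one hA.ne']
      have hΓ : Gamma A ≠ 0 := (Gamma_pos_of_pos hA).ne'
      field_simp
    rw [hval] at h1
    apply h1.congr'
    filter_upwards [eventually_mem_nhdsWithin] with x hx
    have hx0 : (0:ℝ) < x := hx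
    have hdiv : (x / βMGC) ^ A = x ^ A / βMGC ^ A := Real.div_rpow hx0.le hβpos.le A
    have hxA : x ^ A ≠ 0 := (rpow_pos_of_pos hx0 _).ne'
    have hβAne : βMGC ^ A ≠ 0 := (rpow_pos_of_pos hβpos _).ne'
    have hΓ : Gamma A ≠ 0 := (Gamma_pos_of_pos hA).ne'
    simp only [Function.comp_apply]
    rw [hdiv]
    field_simp
  -- conclude
  have hfinal := hN.div hD' hC.ne'
  rw [div_self hC.ne'] at hfinal
  apply hfinal.congr'
  filter_upwards [eventually_mem_nhdsWithin] with x hx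
  have hx0 : (0:ℝ) < x := hx
  have hxA : x ^ A ≠ 0 := (rpow_pos_of_pos hx0 _).ne'
  rcases eq_or_ne ((μ {ω | ∑ j, X j ω ≤ x}).toReal) 0 with hb | hb
  · simp [hb]
  · simp only [Pi.div_apply]
    field_simp
end
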